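/- arXiv:2405.15111 — 9 statements merged into one kernel-verified Lean document; each statement's English description precedes it below -/
import Mathlib

section
/- Let X, Y be Polish spaces, E a Borel equivalence relation on X, and P ⊆ X × Y a Borel E-invariant set with Fσ sections. If there is an E-invariant Borel map x ↦ F_x assigning to each x a nonempty closed subset F_x of Y such that P_x is non-meager in F_x for all x ∈ X, then P admits a Borel E-invariant uniformization, i.e., a Borel function f : X → Y with (x, f(x)) ∈ P for all x and f(x) = f(x') whenever x E x'. -/
/-!
Fix a complete metric and a dense sequence `u` on `Y`. For a nonempty closed `C`, repeatedly taking
the first ball `ball (u n) 2⁻ᵏ` that meets `C` inside the previous ball gives a Cauchy sequence with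
limit in `C`; every choice only asks whether `C` meets an open set, so for an Effros measurable
`x ↦ F x` the limit is Borel in `x`. Applied to `closure (F x ∩ B n)` for a countable basis `B`, this
gives countably many Borel selectors that depend on `F x` alone. As `P_x` is a non-meagre `Fσ` in
`F x`, one of its closed pieces has interior in `F x`, so some `closure (F x ∩ B n)` lies in `P_x`;
the selector with the least such `n` uniformizes `P`, and is `E`-invariant because `F` and `P` are.
-/

open Set Metric Filter Topology

section Measurability

variable {X : Type*} [MeasurableSpace X]

theorem measurable_sInf_setOf {p : ℕ → X → Prop} (hp : ∀ n, MeasurableSet {x | p n x}) :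
    Measurable fun x => sInf {n | p n x} := by
  classical
  -- `Nat.find` of the predicate made true at `0` where it never holds, matching `sInf ∅ = 0`
  have hex : ∀ x, ∃ n, p n x ∨ ∀ k, ¬p k x := fun x =>
    (em (∃ n, p n x)).elim (fun ⟨n, hn⟩ => ⟨n, .inl hn⟩) fun h => ⟨0, .inr (not_exists.mp h)⟩
  have hnever : MeasurableSet {x | ∀ k, ¬p k x} := by
    simpa only [ofPred_forall, ← compl_ofPred] using MeasurableSet.iInter fun k => (hp k).compl
  convert measurable_find hex fun n => (hp n).union hnever using 2 with x
  by_cases h : ∃ n, p n x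
  · rw [Nat.sInf_def (s := {n | p n x}) h]
    exact Nat.find_congr' fun {n} => by simp [h]
  · rw [not_exists] at h
    rw [(Nat.find_eq_zero (hex x)).mpr (Or.inr h)]
    simp [h]

theorem measurableSet_setOf_apply_nat {p : ℕ → X → Prop} {g : X → ℕ} (hg : Measurable g)
    (hp : ∀ n, MeasurableSet {x | p n x}) : MeasurableSet {x | p (g x) x} := by
  have : Measurable fun z : X × ℕ => p z.2 z.1 :=
    measurable_from_prod_countable_left fun n => measurableSet_setOfPred.mp (hp n)
  exact measurableSet_setOfPred.mpr (this.comp (measurable_id.prodMk hg))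

end Measurability

theorem DenseRange.nonempty_setOf_inter_ball_nonempty {Y : Type*} [PseudoMetricSpace Y]
    {u : ℕ → Y} (hu : DenseRange u) {S : Set Y} (hS : S.Nonempty) {r : ℝ} (hr : 0 < r) :
    {n | (S ∩ ball (u n) r).Nonempty}.Nonempty := by
  obtain ⟨y, hy⟩ := hS
  obtain ⟨n, hn⟩ := hu.exists_dist_lt y hr
  exact ⟨n, y, hy, mem_ball.mpr hn⟩

namespace Selection

variable {Y : Type*} [PseudoMetricSpace Y] (u : ℕ → Y)

/-- Indices of a Cauchy sequence in the range of `u`: the `k`-th ball is the first one of radius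
`2⁻ᵏ` meeting `C` inside the previous ball. -/
noncomputable def index (C : Set Y) : ℕ → ℕ
  | 0 => sInf {n | (C ∩ ball (u n) 1).Nonempty}
  | k + 1 => sInf {n | (C ∩ ball (u (index C k)) ((1 / 2) ^ k) ∩
      ball (u n) ((1 / 2) ^ (k + 1))).Nonempty}

noncomputable def point (C : Set Y) : Y :=
  haveI : Nonempty Y := ⟨u 0⟩
  limUnder atTop fun k => u (index u C k)

variable {u}

theorem inter_ball_index_succ_nonempty (hu : DenseRange u) {C : Set Y} {k : ℕ}
    (hk : (C ∩ ball (u (index u C k)) ((1 / 2) ^ k)).Nonempty) :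
    (C ∩ ball (u (index u C k)) ((1 / 2) ^ k) ∩
      ball (u (index u C (k + 1))) ((1 / 2) ^ (k + 1))).Nonempty :=
  Nat.sInf_mem (hu.nonempty_setOf_inter_ball_nonempty hk (by positivity))

theorem inter_ball_index_nonempty (hu : DenseRange u) {C : Set Y} (hC : C.Nonempty) :
    ∀ k, (C ∩ ball (u (index u C k)) ((1 / 2) ^ k)).Nonempty
  | 0 => by
    rw [pow_zero]
    exact Nat.sInf_mem (hu.nonempty_setOf_inter_ball_nonempty hC one_pos)
  | k + 1 => by
    obtain ⟨y, ⟨hyC, -⟩, hy⟩ :=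
      inter_ball_index_succ_nonempty hu (inter_ball_index_nonempty hu hC k)
    exact ⟨y, hyC, hy⟩

theorem index_empty (k : ℕ) : index u ∅ k = 0 := by
  cases k <;> simp [index]

theorem dist_index_succ_le (hu : DenseRange u) (C : Set Y) (k : ℕ) :
    dist (u (index u C k)) (u (index u C (k + 1))) ≤ 2 * (1 / 2) ^ k := by
  rcases C.eq_empty_or_nonempty with rfl | hC
  · simp only [index_empty, dist_self]
    positivity
  obtain ⟨y, ⟨-, hyk⟩, hyk'⟩ :=
    inter_ball_index_succ_nonempty hu (inter_ball_index_nonempty hu hC k)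
  calc dist (u (index u C k)) (u (index u C (k + 1)))
      ≤ dist y (u (index u C k)) + dist y (u (index u C (k + 1))) := dist_triangle_left _ _ _
    _ ≤ (1 / 2) ^ k + (1 / 2) ^ (k + 1) := add_le_add (mem_ball.mp hyk).le (mem_ball.mp hyk').le
    _ ≤ 2 * (1 / 2) ^ k := by rw [pow_succ]; linarith [pow_nonneg (by norm_num : (0 : ℝ) ≤ 1 / 2) k]

theorem tendsto_point [CompleteSpace Y] (hu : DenseRange u) (C : Set Y) :
    Tendsto (fun k => u (index u C k)) atTop (𝓝 (point u C)) :=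
  (cauchySeq_of_le_geometric _ _ (by norm_num) (dist_index_succ_le hu C)).tendsto_limUnder

theorem point_mem [CompleteSpace Y] (hu : DenseRange u) {C : Set Y} (hC : IsClosed C)
    (hne : C.Nonempty) : point u C ∈ C := by
  choose y hyC hy using inter_ball_index_nonempty hu hne
  have hdist : Tendsto (fun k => dist (u (index u C k)) (y k)) atTop (𝓝 0) :=
    squeeze_zero (fun _ => dist_nonneg) (fun k => (mem_ball'.mp (hy k)).le)
      (tendsto_pow_atTop_nhds_zero_of_lt_one (by norm_num) (by norm_num))
  exact hC.mem_of_tendsto ((tendsto_point hu C).congr_dist hdist) (.of_forall hyC)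

end Selection

section Effros

variable {X Y : Type*} [MeasurableSpace X] [TopologicalSpace Y]

def EffrosMeasurable (F : X → Set Y) : Prop :=
  ∀ U : Set Y, IsOpen U → MeasurableSet {x | (F x ∩ U).Nonempty}

theorem EffrosMeasurable.closure_inter {F : X → Set Y} (hF : EffrosMeasurable F) {U : Set Y}
    (hU : IsOpen U) : EffrosMeasurable fun x => closure (F x ∩ U) := by
  intro V hV
  simp only [closure_inter_open_nonempty_iff hV, inter_assoc]
  exact hF _ (hU.inter hV)

end Effros

namespace Selection

variable {X Y : Type*} [MeasurableSpace X] [PseudoMetricSpace Y] {u : ℕ → Y} {F : X → Set Y}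

theorem measurable_index (hF : EffrosMeasurable F) :
    ∀ k, Measurable fun x => index u (F x) k
  | 0 => measurable_sInf_setOf fun n => hF _ isOpen_ball
  | k + 1 => measurable_sInf_setOf fun n =>
      measurableSet_setOf_apply_nat (p := fun i x =>
        (F x ∩ ball (u i) ((1 / 2) ^ k) ∩ ball (u n) ((1 / 2) ^ (k + 1))).Nonempty)
        (measurable_index hF k) fun i => by
          simpa only [inter_assoc] using hF _ (isOpen_ball.inter isOpen_ball)

theorem measurable_point [CompleteSpace Y] [MeasurableSpace Y] [BorelSpace Y]
    (hu : DenseRange u) (hF : EffrosMeasurable F) : Measurable fun x => point u (F x) :=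
  measurable_of_tendsto_metrizable (fun k => measurable_from_nat.comp (measurable_index hF k))
    (tendsto_pi_nhds.mpr fun x => tendsto_point hu (F x))

end Selection

theorem IsClosed.nonempty_interior_of_not_isMeagre {Y : Type*} [TopologicalSpace Y] {s : Set Y}
    (hs : IsClosed s) (h : ¬IsMeagre s) : (interior s).Nonempty :=
  nonempty_iff_ne_empty.mpr fun h' => h (hs.isNowhereDense_iff.mpr h').isMeagre

theorem exists_closure_inter_subset_of_not_isMeagre {Y : Type*} [TopologicalSpace Y]
    {b : Set (Set Y)} (hb : TopologicalSpace.IsTopologicalBasis b) {C S : Set Y}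
    (hS : ∃ K : ℕ → Set Y, (∀ n, IsClosed (K n)) ∧ S = ⋃ n, K n)
    (hCS : ¬IsMeagre {y : C | (y : Y) ∈ S}) :
    ∃ U ∈ b, (C ∩ U).Nonempty ∧ closure (C ∩ U) ⊆ S := by
  obtain ⟨K, hK, rfl⟩ := hS
  obtain ⟨n, hn⟩ : ∃ n, ¬IsMeagre ((↑) ⁻¹' K n : Set C) := by
    by_contra! h
    have := isMeagre_iUnion h
    rw [← preimage_iUnion] at this
    exact hCS this
  obtain ⟨z, hz⟩ :=
    ((hK n).preimage continuous_subtype_val).nonempty_interior_of_not_isMeagre hn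
  obtain ⟨W, hWK, hW, hzW⟩ := mem_interior.mp hz
  obtain ⟨V, hV, rfl⟩ := isOpen_induced_iff.mp hW
  obtain ⟨U, hUb, hzU, hUV⟩ := hb.exists_subset_of_mem_open hzW hV
  refine ⟨U, hUb, ⟨z, z.2, hzU⟩, ?_⟩
  refine (closure_minimal (fun y hy => ?_) (hK n)).trans (subset_iUnion K n)
  exact hWK (show (⟨y, hy.1⟩ : C) ∈ (↑) ⁻¹' V from hUV hy.2)

open Selection TopologicalSpace in
theorem stmt0_general {X Y : Type*}
    [MeasurableSpace X]
    [TopologicalSpace Y] [PolishSpace Y] [MeasurableSpace Y] [BorelSpace Y]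
    (E : X → X → Prop)
    (P : Set (X × Y)) (hPborel : MeasurableSet P)
    (hPinv : ∀ x x', E x x' → ∀ y, ((x, y) ∈ P ↔ (x', y) ∈ P))
    (hPsectionsFsigma : ∀ x, ∃ F : ℕ → Set Y,
      (∀ n, IsClosed (F n)) ∧ {y | (x, y) ∈ P} = ⋃ n, F n)
    (F : X → Set Y)
    (hFinv : ∀ x x', E x x' → F x = F x')
    (hFborel : ∀ U : Set Y, IsOpen U → MeasurableSet {x | (F x ∩ U).Nonempty})
    (hnonmeager : ∀ x, ¬ IsMeagre {y : F x | (x, (y : Y)) ∈ P}) :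
    ∃ f : X → Y, Measurable f ∧ (∀ x, (x, f x) ∈ P) ∧
      ∀ x x', E x x' → f x = f x' := by
  classical
  obtain ⟨B, hB⟩ := exists_seq_basis Y
  have hgood : ∀ x, ∃ n, (F x ∩ B n).Nonempty ∧ closure (F x ∩ B n) ⊆ {y | (x, y) ∈ P} := by
    intro x
    obtain ⟨-, ⟨n, rfl⟩, hU⟩ :=
      exists_closure_inter_subset_of_not_isMeagre hB (hPsectionsFsigma x) (hnonmeager x)
    exact ⟨n, hU⟩
  rcases isEmpty_or_nonempty X with hX | ⟨⟨x₀⟩⟩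
  · exact ⟨isEmptyElim, measurable_of_empty _, isEmptyElim, fun x => isEmptyElim x⟩
  have : Nonempty Y := (hgood x₀).elim fun _ h => h.1.to_subtype.map (↑)
  let := upgradeIsCompletelyMetrizable Y
  set g : ℕ → X → Y := fun n x => point (denseSeq Y) (closure (F x ∩ B n))
  have hg_meas (n : ℕ) : Measurable (g n) :=
    measurable_point (denseRange_denseSeq Y)
      (EffrosMeasurable.closure_inter hFborel (hB.isOpen (mem_range_self n)))
  have hgP (x : X) : ∃ n, (x, g n x) ∈ P := by
    obtain ⟨n, hne, hsub⟩ := hgood x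
    exact ⟨n, hsub (point_mem (denseRange_denseSeq Y) isClosed_closure
      (hne.mono subset_closure))⟩
  refine ⟨fun x => g (Nat.find (hgP x)) x,
    Measurable.find hg_meas (fun n => measurable_id.prodMk (hg_meas n) hPborel) hgP,
    fun x => Nat.find_spec (hgP x), fun x x' hxx' => ?_⟩
  have hg (n : ℕ) : g n x = g n x' := by simp only [g, hFinv x x' hxx']
  have hfind : Nat.find (hgP x) = Nat.find (hgP x') :=
    Nat.find_congr' fun {n} => by rw [hg n]; exact hPinv x x' hxx' (g n x')
  show g (Nat.find (hgP x)) x = g (Nat.find (hgP x')) x'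
  rw [hfind, hg]

/-- If `P ⊆ X × Y` is a Borel `E`-invariant set with `Fσ` sections, and there is an
`E`-invariant Borel assignment `x ↦ F x` of nonempty closed subsets of `Y` (Borel in the Effros
Borel structure) such that `P_x` is non-meager in `F x` for every `x`, then `P` admits a Borel
`E`-invariant uniformization. -/
theorem stmt0 {X Y : Type*}
    [TopologicalSpace X] [PolishSpace X] [MeasurableSpace X] [BorelSpace X]
    [TopologicalSpace Y] [PolishSpace Y] [MeasurableSpace Y] [BorelSpace Y]
    (E : X → X → Prop) (hE : Equivalence E)
    (hEborel : MeasurableSet {p : X × X | E p.1 p.2})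
    (P : Set (X × Y)) (hPborel : MeasurableSet P)
    (hPinv : ∀ x x', E x x' → ∀ y, ((x, y) ∈ P ↔ (x', y) ∈ P))
    (hPsectionsFsigma : ∀ x, ∃ F : ℕ → Set Y,
      (∀ n, IsClosed (F n)) ∧ {y | (x, y) ∈ P} = ⋃ n, F n)
    (F : X → Set Y)
    (hFclosed : ∀ x, IsClosed (F x)) (hFne : ∀ x, (F x).Nonempty)
    (hFinv : ∀ x x', E x x' → F x = F x')
    (hFborel : ∀ U : Set Y, IsOpen U → MeasurableSet {x | (F x ∩ U).Nonempty})
    (hnonmeager : ∀ x, ¬ IsMeagre {y : F x | (x, (y : Y)) ∈ P}) :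
    ∃ f : X → Y, Measurable f ∧ (∀ x, (x, f x) ∈ P) ∧
      ∀ x x', E x x' → f x = f x' :=
  stmt0_general E P hPborel hPinv hPsectionsFsigma F hFinv hFborel hnonmeager
end

section
/- Let B ⊆ 2^ℕ be a Borel non-meager set. Then there is a continuous injection φ : 2^ℕ → 2^ℕ with range contained in B such that for all x, y ∈ 2^ℕ, x E₀ y if and only if φ(x) E₀ φ(y), where E₀ is the eventual-equality relation on 2^ℕ. -/
open Set

namespace E0Embed

/-- Cylinder set determined by a finite string. -/
def cyl (u : List Bool) : Set (ℕ → Bool) := {x | ∀ i, i < u.length → x i = u.getD i true}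

lemma isOpen_cyl (u : List Bool) : IsOpen (cyl u) := by
  have h : cyl u = ⋂ i ∈ Finset.range u.length, {x : ℕ → Bool | x i = u.getD i true} := by
    ext x; simp [cyl]
  rw [h]
  refine isOpen_biInter_finset fun i _ => ?_
  have : {x : ℕ → Bool | x i = u.getD i true} = (fun x : ℕ → Bool => x i) ⁻¹' {u.getD i true} := rfl
  rw [this]
  exact (isOpen_discrete _).preimage (continuous_apply i)

lemma cyl_nonempty (u : List Bool) : (cyl u).Nonempty :=
  ⟨fun i => u.getD i true, fun _ _ => rfl⟩

lemma cyl_append_subset (u w : List Bool) : cyl (u ++ w) ⊆ cyl u := by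
  intro x hx i hi
  have h := hx i (by simp only [List.length_append]; omega)
  rwa [List.getD_append _ _ _ _ hi] at h

/-- Basic neighborhoods in Cantor space. -/
lemma exists_agree_basis {U : Set (ℕ → Bool)} (hU : IsOpen U) {x : ℕ → Bool} (hx : x ∈ U) :
    ∃ n, ∀ y : ℕ → Bool, (∀ i < n, y i = x i) → y ∈ U := by
  have h : U ∈ nhds x := hU.mem_nhds hx
  rw [nhds_pi, Filter.mem_pi] at h
  obtain ⟨I, hIfin, t, ht, hsub⟩ := h
  obtain ⟨N, hN⟩ := hIfin.bddAbove
  refine ⟨N + 1, fun y hy => hsub fun i hi => ?_⟩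
  have h1 : t i ∈ nhds (x i) := ht i
  rw [nhds_discrete, Filter.mem_pure] at h1
  have : i < N + 1 := Nat.lt_succ_of_le (hN hi)
  rw [hy i this]
  exact h1

/-- A dense open set absorbs extensions of any string. -/
lemma dense_ext {Dn : Set (ℕ → Bool)} (ho : IsOpen Dn) (hd : Dense Dn) (u : List Bool) :
    ∃ w, cyl (u ++ w) ⊆ Dn := by
  obtain ⟨x, hxu, hxD⟩ := hd.inter_open_nonempty (cyl u) (isOpen_cyl u) (cyl_nonempty u)
  obtain ⟨n, hn⟩ := exists_agree_basis ho hxD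
  refine ⟨List.ofFn (fun j : Fin n => x (u.length + (j : ℕ))), fun y hy => hn y fun i hi => ?_⟩
  have hlen : (u ++ List.ofFn fun j : Fin n => x (u.length + (j : ℕ))).length = u.length + n := by
    simp
  by_cases h : i < u.length
  · have h1 := hy i (by omega)
    rw [List.getD_append _ _ _ _ h] at h1
    rw [h1, ← hxu i h]
  · push_neg at h
    have hilt : i < u.length + n := by omega
    have h1 := hy i (by omega)
    rw [List.getD_append_right _ _ _ _ h] at h1
    have h2 : i - u.length < n := by omega
    rw [List.getD_eq_getElem _ _ (by simpa using h2), List.getElem_ofFn] at h1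
    rw [h1]
    congr 1
    simp only [Fin.val_mk]
    omega

lemma dense_ext_list {Dn : Set (ℕ → Bool)} (ho : IsOpen Dn) (hd : Dense Dn) :
    ∀ L : List (List Bool), ∃ w, ∀ u ∈ L, cyl (u ++ w) ⊆ Dn := by
  intro L
  induction L with
  | nil => exact ⟨[], by simp⟩
  | cons a L ih =>
    obtain ⟨w, hw⟩ := ih
    obtain ⟨w', hw'⟩ := dense_ext ho hd (a ++ w)
    refine ⟨w ++ w', fun u hu => ?_⟩
    rcases List.mem_cons.1 hu with rfl | hu
    · rw [← List.append_assoc]; exact hw'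
    · rw [← List.append_assoc]
      exact (cyl_append_subset (u ++ w) w').trans (hw u hu)

/-- Version quantified over all `σ : ℕ → Bool`, when the string depends only on finitely
many coordinates. -/
lemma dense_ext_forall {Dn : Set (ℕ → Bool)} (ho : IsOpen Dn) (hd : Dense Dn)
    (F : (ℕ → Bool) → List Bool) (m : ℕ)
    (hF : ∀ σ τ : ℕ → Bool, (∀ i < m, σ i = τ i) → F σ = F τ) :
    ∃ w, ∀ σ : ℕ → Bool, cyl (F σ ++ w) ⊆ Dn := by
  obtain ⟨w, hw⟩ := dense_ext_list ho hd
    (((Finset.univ : Finset (Fin m → Bool)).toList).map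
      (fun v => F (fun i => if h : i < m then v ⟨i, h⟩ else true)))
  refine ⟨w, fun σ => ?_⟩
  have hmem : F σ ∈ ((Finset.univ : Finset (Fin m → Bool)).toList).map
      (fun v => F (fun i => if h : i < m then v ⟨i, h⟩ else true)) := by
    refine List.mem_map.2 ⟨fun i : Fin m => σ i, by simp [Finset.mem_toList], ?_⟩
    exact (hF _ _ fun i hi => by simp [hi]).symm
  exact hw _ hmem

/-- The candidate prefix at stage `n`:
`s ++ (block 0) ++ ⋯ ++ (block (n-1)) ++ [σ n]` where block `i` is `σ i :: prev i`. -/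
def Q (s : List Bool) (prev : List (List Bool)) (n : ℕ) (σ : ℕ → Bool) : List Bool :=
  s ++ ((List.range n).flatMap fun i => σ i :: prev.getD i []) ++ [σ n]

lemma Q_local (s : List Bool) (prev : List (List Bool)) (n : ℕ) (σ τ : ℕ → Bool)
    (h : ∀ i < n + 1, σ i = τ i) : Q s prev n σ = Q s prev n τ := by
  unfold Q
  rw [h n n.lt_succ_self]
  congr 2
  rw [List.flatMap_def, List.flatMap_def]
  exact congrArg _ (List.map_congr_left fun i hi =>
    by rw [h i (Nat.lt_succ_of_lt (List.mem_range.1 hi))])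

/-- Choice of the common tail at stage `n`. -/
noncomputable def pick (s : List Bool) (Dn : Set (ℕ → Bool)) (n : ℕ)
    (prev : List (List Bool)) : List Bool :=
  @dite _ (∃ w, ∀ σ : ℕ → Bool, cyl (Q s prev n σ ++ w) ⊆ Dn) (Classical.propDecidable _)
    (fun h => h.choose) (fun _ => [])

lemma pick_spec (s : List Bool) {Dn : Set (ℕ → Bool)} (ho : IsOpen Dn) (hd : Dense Dn)
    (n : ℕ) (prev : List (List Bool)) (σ : ℕ → Bool) :
    cyl (Q s prev n σ ++ pick s Dn n prev) ⊆ Dn := by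
  have h : ∃ w, ∀ σ : ℕ → Bool, cyl (Q s prev n σ ++ w) ⊆ Dn :=
    dense_ext_forall ho hd (Q s prev n) (n + 1) (Q_local s prev n)
  rw [pick, dif_pos h]
  exact h.choose_spec σ

/-- The list of tails chosen so far. -/
noncomputable def g (s : List Bool) (D : ℕ → Set (ℕ → Bool)) : ℕ → List (List Bool)
  | 0 => []
  | n + 1 => g s D n ++ [pick s (D n) n (g s D n)]

/-- The tail chosen at stage `n`. -/
noncomputable def rr (s : List Bool) (D : ℕ → Set (ℕ → Bool)) (n : ℕ) : List Bool :=
  pick s (D n) n (g s D n)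

lemma g_length (s : List Bool) (D : ℕ → Set (ℕ → Bool)) (n : ℕ) : (g s D n).length = n := by
  induction n with
  | zero => rfl
  | succ n ih => simp [g, ih]

lemma g_getD (s : List Bool) (D : ℕ → Set (ℕ → Bool)) :
    ∀ n, ∀ i < n, (g s D n).getD i [] = rr s D i := by
  intro n
  induction n with
  | zero => omega
  | succ n ih =>
    intro i hi
    rcases Nat.lt_or_ge i n with h | h
    · rw [g, List.getD_append _ _ _ _ (by rw [g_length]; exact h)]
      exact ih i h
    · have hie : i = n := by omega
      subst hie
      rw [g, List.getD_append_right _ _ _ _ (by rw [g_length])]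
      simp [g_length, rr]

/-- The prefix of `φ x` of `n` full blocks. -/
noncomputable def P (s : List Bool) (D : ℕ → Set (ℕ → Bool)) (x : ℕ → Bool) (n : ℕ) :
    List Bool :=
  s ++ (List.range n).flatMap fun i => x i :: rr s D i

lemma P_zero (s : List Bool) (D : ℕ → Set (ℕ → Bool)) (x : ℕ → Bool) : P s D x 0 = s := by
  simp [P]

lemma P_succ (s : List Bool) (D : ℕ → Set (ℕ → Bool)) (x : ℕ → Bool) (n : ℕ) :
    P s D x (n + 1) = P s D x n ++ (x n :: rr s D n) := by
  unfold P
  rw [List.range_succ, List.flatMap_append, ← List.append_assoc]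
  simp

lemma Q_g (s : List Bool) (D : ℕ → Set (ℕ → Bool)) (x : ℕ → Bool) (n : ℕ) :
    Q s (g s D n) n x ++ rr s D n = P s D x (n + 1) := by
  have hq : Q s (g s D n) n x
      = s ++ ((List.range n).flatMap fun i => x i :: rr s D i) ++ [x n] := by
    unfold Q
    congr 2
    rw [List.flatMap_def, List.flatMap_def]
    exact congrArg _ (List.map_congr_left fun i hi => by
      rw [g_getD s D n i (List.mem_range.1 hi)])
  rw [hq, P_succ]
  unfold P
  simp

/-- Length of `P`, independent of `x`. -/
noncomputable def ℓ (s : List Bool) (D : ℕ → Set (ℕ → Bool)) (n : ℕ) : ℕ :=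
  (P s D (fun _ => true) n).length

lemma len_P (s : List Bool) (D : ℕ → Set (ℕ → Bool)) (x : ℕ → Bool) (n : ℕ) :
    (P s D x n).length = ℓ s D n := by
  induction n with
  | zero => simp [ℓ, P_zero]
  | succ n ih => rw [ℓ, P_succ, P_succ, List.length_append, List.length_append, ← ℓ, ih]; simp

lemma ℓ_succ (s : List Bool) (D : ℕ → Set (ℕ → Bool)) (n : ℕ) :
    ℓ s D (n + 1) = ℓ s D n + ((rr s D n).length + 1) := by
  rw [ℓ, P_succ, List.length_append, ← ℓ]
  simp

lemma ℓ_lt_succ (s : List Bool) (D : ℕ → Set (ℕ → Bool)) (n : ℕ) :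
    ℓ s D n < ℓ s D (n + 1) := by
  rw [ℓ_succ]; omega

lemma ℓ_mono (s : List Bool) (D : ℕ → Set (ℕ → Bool)) : StrictMono (ℓ s D) :=
  strictMono_nat_of_lt_succ (ℓ_lt_succ s D)

lemma le_ℓ (s : List Bool) (D : ℕ → Set (ℕ → Bool)) (n : ℕ) : n ≤ ℓ s D n := by
  induction n with
  | zero => omega
  | succ n ih => have := ℓ_lt_succ s D n; omega

/-- getD is stable under passing to a longer prefix. -/
lemma getD_P_stable (s : List Bool) (D : ℕ → Set (ℕ → Bool)) (x : ℕ → Bool) {n m k : ℕ}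
    (hnm : n ≤ m) (hk : k < ℓ s D n) :
    (P s D x m).getD k true = (P s D x n).getD k true := by
  induction m with
  | zero =>
    have : n = 0 := by omega
    subst this; rfl
  | succ m ih =>
    rcases Nat.lt_or_ge n (m + 1) with h | h
    · have hnm' : n ≤ m := by omega
      have hkm : k < (P s D x m).length := by
        rw [len_P]
        exact lt_of_lt_of_le hk ((ℓ_mono s D).monotone hnm')
      rw [P_succ, List.getD_append _ _ _ _ hkm]
      exact ih hnm'
    · have heq : n = m + 1 := by omega
      subst heq
      rfl

/-- The embedding. -/
noncomputable def φ (s : List Bool) (D : ℕ → Set (ℕ → Bool)) (x : ℕ → Bool) (k : ℕ) : Bool :=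
  (P s D x (k + 1)).getD k true

lemma φ_eq (s : List Bool) (D : ℕ → Set (ℕ → Bool)) (x : ℕ → Bool) {k n : ℕ}
    (hk : k < ℓ s D n) : φ s D x k = (P s D x n).getD k true := by
  have hk1 : k < ℓ s D (k + 1) := lt_of_lt_of_le (k.lt_succ_self) (le_ℓ s D (k + 1))
  rcases Nat.le_total (k + 1) n with h | h
  · rw [φ, ← getD_P_stable s D x h hk1]
  · rw [φ, getD_P_stable s D x h hk]

lemma φ_mem_cyl (s : List Bool) (D : ℕ → Set (ℕ → Bool)) (x : ℕ → Bool) (n : ℕ) :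
    φ s D x ∈ cyl (P s D x n) := by
  intro i hi
  rw [len_P] at hi
  exact φ_eq s D x hi

lemma φ_block_head (s : List Bool) (D : ℕ → Set (ℕ → Bool)) (x : ℕ → Bool) (n : ℕ) :
    φ s D x (ℓ s D n) = x n := by
  rw [φ_eq s D x (ℓ_lt_succ s D n), P_succ,
    List.getD_append_right _ _ _ _ (by rw [len_P])]
  simp [len_P]

lemma φ_block_tail (s : List Bool) (D : ℕ → Set (ℕ → Bool)) (x : ℕ → Bool) {n k : ℕ}
    (h1 : ℓ s D n < k) (h2 : k < ℓ s D (n + 1)) :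
    φ s D x k = (rr s D n).getD (k - ℓ s D n - 1) true := by
  rw [φ_eq s D x h2, P_succ, List.getD_append_right _ _ _ _ (by rw [len_P]; omega)]
  rw [len_P]
  have : k - ℓ s D n = (k - ℓ s D n - 1) + 1 := by omega
  rw [this]
  simp

lemma exists_block (s : List Bool) (D : ℕ → Set (ℕ → Bool)) {k n : ℕ} (h : ℓ s D n ≤ k) :
    ∃ m, n ≤ m ∧ ℓ s D m ≤ k ∧ k < ℓ s D (m + 1) := by
  have hex : ∃ j, k < ℓ s D j := ⟨k + 1, lt_of_lt_of_le k.lt_succ_self (le_ℓ s D (k + 1))⟩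
  have hj := Nat.find_spec hex
  have hgt : n < Nat.find hex := by
    by_contra hc
    push_neg at hc
    exact absurd (lt_of_lt_of_le hj ((ℓ_mono s D).monotone hc)) (by omega)
  obtain ⟨m, hm⟩ : ∃ m, Nat.find hex = m + 1 := ⟨Nat.find hex - 1, by omega⟩
  refine ⟨m, by omega, ?_, by rw [← hm]; exact hj⟩
  have := Nat.find_min hex (m := m) (by omega)
  omega

end E0Embed

/-- The eventual-equality relation `E₀` on Cantor space. -/
def E0 (x y : ℕ → Bool) : Prop := ∀ᶠ n in Filter.atTop, x n = y n

open E0Embed in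
/-- Any Borel non-meager subset `B` of Cantor space admits a continuous embedding
of `E₀` into the restriction of `E₀` to `B`. -/
theorem stmt1 (B : Set (ℕ → Bool)) (hBborel : MeasurableSet B) (hBnonmeager : ¬ IsMeagre B) :
    ∃ φ : (ℕ → Bool) → (ℕ → Bool), Continuous φ ∧ Function.Injective φ ∧
      range φ ⊆ B ∧ ∀ x y, (E0 x y ↔ E0 (φ x) (φ y)) := by
  classical
  -- Step 1: B is comeager in some cylinder.
  obtain ⟨U, hUopen, hUeq⟩ := hBborel.baireMeasurableSet.residualEq_isOpen
  have hUne : U.Nonempty := by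
    rcases U.eq_empty_or_nonempty with h | h
    · subst h
      exfalso
      apply hBnonmeager
      rw [IsMeagre]
      refine Filter.mem_of_superset hUeq ?_
      intro x hx
      have hx' : x ∈ B ↔ x ∈ (∅ : Set (ℕ → Bool)) := iff_of_eq hx
      simpa using fun h => hx'.mp h
    · exact h
  obtain ⟨z, hz⟩ := hUne
  obtain ⟨n0, hn0⟩ := exists_agree_basis hUopen hz
  set s : List Bool := List.ofFn (fun i : Fin n0 => z i) with hs
  have hlens : s.length = n0 := by simp [hs]
  have hcylU : cyl s ⊆ U := by
    intro y hy
    apply hn0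
    intro i hi
    have hi' : i < s.length := by omega
    have h2 := hy i hi'
    rw [List.getD_eq_getElem _ _ hi'] at h2
    rw [h2]
    simp [hs]
  -- Step 2: cyl s \ B is meager; extract dense open sets.
  have hMc : (cyl s \ B)ᶜ ∈ residual (ℕ → Bool) := by
    refine Filter.mem_of_superset hUeq ?_
    intro x hx hxM
    exact hxM.2 ((iff_of_eq hx).mpr (hcylU hxM.1))
  rw [mem_residual_iff] at hMc
  obtain ⟨S, hSo, hSd, hSc, hSsub⟩ := hMc
  have hS'ne : (insert univ S : Set (Set (ℕ → Bool))).Nonempty := ⟨univ, mem_insert _ _⟩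
  obtain ⟨D, hD⟩ := (hSc.insert univ).exists_eq_range hS'ne
  have hDo : ∀ n, IsOpen (D n) := by
    intro n
    have : D n ∈ insert univ S := by rw [hD]; exact mem_range_self n
    rcases this with h | h
    · rw [h]; exact isOpen_univ
    · exact hSo _ h
  have hDd : ∀ n, Dense (D n) := by
    intro n
    have : D n ∈ insert univ S := by rw [hD]; exact mem_range_self n
    rcases this with h | h
    · rw [h]; exact dense_univ
    · exact hSd _ h
  have hDsub : (⋂ n, D n) ⊆ (cyl s \ B)ᶜ := by
    refine subset_trans ?_ hSsub
    intro x hx t ht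
    have : t ∈ insert univ S := mem_insert_of_mem _ ht
    rw [hD] at this
    obtain ⟨n, rfl⟩ := this
    exact mem_iInter.1 hx n
  -- Step 3: the embedding.
  refine ⟨φ s D, ?_, ?_, ?_, ?_⟩
  · -- continuity
    apply continuous_pi
    intro k
    have hloc : ∀ x y : ℕ → Bool, (∀ i < k + 1, x i = y i) → φ s D x k = φ s D y k := by
      intro x y hxy
      unfold φ P
      congr 2
      rw [List.flatMap_def, List.flatMap_def]
      exact congrArg _ (List.map_congr_left fun i hi => by
        rw [hxy i (List.mem_range.1 hi)])
    have hfact : (fun x => φ s D x k)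
        = (fun v : Fin (k + 1) → Bool =>
            φ s D (fun i => if h : i < k + 1 then v ⟨i, h⟩ else true) k)
          ∘ (fun x (i : Fin (k + 1)) => x (i : ℕ)) := by
      funext x
      exact (hloc _ x fun i hi => by simp [hi]).symm
    rw [hfact]
    exact (continuous_of_discreteTopology).comp
      (continuous_pi fun i => continuous_apply (i : ℕ))
  · -- injectivity
    intro x y hxy
    funext n
    have := congrFun hxy (ℓ s D n)
    rwa [φ_block_head, φ_block_head] at this
  · -- range ⊆ B
    rintro _ ⟨x, rfl⟩
    have h1 : φ s D x ∈ cyl s := by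
      have := φ_mem_cyl s D x 0
      rwa [P_zero] at this
    have h2 : φ s D x ∈ ⋂ n, D n := by
      refine mem_iInter.2 fun n => ?_
      have hsub := pick_spec s (hDo n) (hDd n) n (g s D n) x
      rw [← rr, Q_g] at hsub
      exact hsub (φ_mem_cyl s D x (n + 1))
    have h3 := hDsub h2
    by_contra hB
    exact h3 ⟨h1, hB⟩
  · -- E₀-equivalence
    intro x y
    constructor
    · intro h
      rw [E0, Filter.eventually_atTop] at h ⊢
      obtain ⟨N, hN⟩ := h
      refine ⟨ℓ s D N, fun k hk => ?_⟩
      obtain ⟨m, hmN, hm1, hm2⟩ := exists_block s D (n := N) hk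
      rcases Nat.lt_or_ge (ℓ s D m) k with h' | h'
      · rw [φ_block_tail s D x h' hm2, φ_block_tail s D y h' hm2]
      · have hkm : k = ℓ s D m := by omega
        subst hkm
        rw [φ_block_head, φ_block_head]
        exact hN m hmN
    · intro h
      rw [E0, Filter.eventually_atTop] at h ⊢
      obtain ⟨K, hK⟩ := h
      refine ⟨K, fun n hn => ?_⟩
      have := hK (ℓ s D n) (le_trans hn (le_ℓ s D n))
      rwa [φ_block_head, φ_block_head] at this
end

section
/- Let X = [ℕ]^{ℵ₀} and define P ⊆ X × 2^ℕ by P(A, B) iff both A \ B and A ∩ B are infinite. Then P does not admit a Borel E₀-invariant uniformization: there is no Borel function f : X → 2^ℕ such that P(A, f(A)) for all A ∈ X and f(A) = f(A') whenever A E₀ A' (i.e., A and A' have finite symmetric difference). -/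
/-!
The proof goes through the Galvin–Prikry theorem in Ellentuck's form. Call a family of subsets of
`ℕ` almost Ellentuck open if it differs from an Ellentuck-open family by a Ramsey-null one. These
families form a σ-algebra containing the cylinders `{C | n ∈ C}`, hence every Borel family, and
each of them is completely Ramsey: for Ellentuck-open families this is Galvin's accept/reject
argument, and both it and the σ-ideal property of Ramsey-null families rest on a fusion lemma.

For a Borel `E₀`-invariant `f`, a diagonal fusion over the coordinate families
`{C | f C i = true}` yields an infinite `D` on whose infinite subsets `f` is constant, say equal
to `e`. Then `D ∩ e` is an infinite subset of `D`, so `f (D ∩ e) = e`, yet `(D ∩ e) \ e` is empty.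
-/

open Set

/-- The relation `P(A,B)` : both `A \ B` and `A ∩ B` are infinite. -/
def PRel (A B : ℕ → Bool) : Prop :=
  {n | A n = true ∧ B n = false}.Infinite ∧ {n | A n = true ∧ B n = true}.Infinite

open scoped symmDiff MeasureTheory

/-- `D ∩ above t` is the set written `D/t` in the theory of Ramsey spaces. -/
def above (t : Finset ℕ) : Set ℕ := {n | ∀ m ∈ t, m < n}

@[simp] lemma mem_above {t : Finset ℕ} {n : ℕ} : n ∈ above t ↔ ∀ m ∈ t, m < n := Iff.rfl

@[simp] lemma above_empty : above ∅ = univ := by ext; simp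

lemma above_insert (b : ℕ) (t : Finset ℕ) : above (insert b t) = Ioi b ∩ above t := by
  ext; simp

lemma above_union (s t : Finset ℕ) : above (s ∪ t) = above s ∩ above t := by
  ext; simp [or_imp, forall_and]

lemma above_anti {s t : Finset ℕ} (h : s ⊆ t) : above t ⊆ above s :=
  fun _ hn m hm => hn m (h hm)

lemma finite_compl_above (t : Finset ℕ) : (above t)ᶜ.Finite :=
  (finite_Iic (t.sup id)).subset fun n hn => by
    simp only [mem_compl_iff, mem_above, not_forall, not_lt] at hn
    obtain ⟨m, hm, hnm⟩ := hn
    exact hnm.trans (Finset.le_sup (f := id) hm)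

lemma sdiff_subset_above_of_coe_eq_inter_Iic {t : Finset ℕ} {C : Set ℕ} {m : ℕ}
    (ht : (t : Set ℕ) = C ∩ Iic m) : C \ t ⊆ above t := by
  rintro x ⟨hxC, hxt⟩ y hy
  have hmx : m < x := not_le.1 fun h => hxt (ht ▸ ⟨hxC, h⟩)
  have hym : y ≤ m := (ht ▸ Finset.mem_coe.2 hy : y ∈ C ∩ Iic m).2
  omega

lemma exists_initial_segment {C : Set ℕ} (hC : C.Infinite) {s : Finset ℕ} (hs : ↑s ⊆ C) (i : ℕ) :
    ∃ t : Finset ℕ, s ⊆ t ∧ ↑t ⊆ C ∧ i ≤ t.sup id ∧ C \ ↑t ⊆ above t := by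
  obtain ⟨m, hmC, hm⟩ := hC.exists_gt (max i (s.sup id))
  obtain ⟨t, ht⟩ : ∃ t : Finset ℕ, ↑t = C ∩ Iic m :=
    ⟨_, ((finite_Iic m).inter_of_right C).coe_toFinset⟩
  have hmt : m ∈ t := by rw [← Finset.mem_coe, ht]; exact ⟨hmC, mem_Iic.2 le_rfl⟩
  refine ⟨t, fun x hx => ?_, ht ▸ inter_subset_left,
    (le_max_left _ _).trans (hm.le.trans (Finset.le_sup (f := id) hmt)),
    sdiff_subset_above_of_coe_eq_inter_Iic ht⟩
  rw [← Finset.mem_coe, ht]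
  exact ⟨hs hx, (Finset.le_sup (f := id) hx).trans ((le_max_right _ _).trans hm.le)⟩

/-- The basic Ellentuck-open family `[t, B]`. -/
def ellentuckNbhd (t : Finset ℕ) (B : Set ℕ) : Set (Set ℕ) :=
  {C | ↑t ⊆ C ∧ C \ ↑t ⊆ B ∧ C.Infinite}

lemma ellentuckNbhd_mono {t : Finset ℕ} {B B' : Set ℕ} (h : B' ⊆ B) :
    ellentuckNbhd t B' ⊆ ellentuckNbhd t B :=
  fun _ hC => ⟨hC.1, hC.2.1.trans h, hC.2.2⟩

@[simp] lemma ellentuckNbhd_empty (B : Set ℕ) :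
    ellentuckNbhd ∅ B = {C | C ⊆ B ∧ C.Infinite} := by
  simp [ellentuckNbhd]

lemma exists_infinite_subset_forall_mem {α ι : Type*} {Q : ι → Set α → Prop}
    (hQ : ∀ i ⦃B B'⦄, B' ⊆ B → Q i B → Q i B') (T : Finset ι) {B₀ : Set α}
    (hB₀ : B₀.Infinite) (h : ∀ i ∈ T, ∀ B ⊆ B₀, B.Infinite → ∃ B' ⊆ B, B'.Infinite ∧ Q i B') :
    ∃ B ⊆ B₀, B.Infinite ∧ ∀ i ∈ T, Q i B := by
  classical
  induction T using Finset.induction_on with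
  | empty => exact ⟨B₀, subset_rfl, hB₀, by simp⟩
  | insert i T _ ih =>
    obtain ⟨B₁, hB₁, hB₁i, hQ₁⟩ := ih fun j hj => h j (Finset.mem_insert_of_mem hj)
    obtain ⟨B₂, hB₂, hB₂i, hQ₂⟩ := h i (Finset.mem_insert_self i T) B₁ hB₁ hB₁i
    refine ⟨B₂, hB₂.trans hB₁, hB₂i, ?_⟩
    simp only [Finset.mem_insert, forall_eq_or_imp]
    exact ⟨hQ₂, fun j hj => hQ j hB₂ (hQ₁ j hj)⟩

lemma exists_fusion_seq {good : Finset ℕ → Set ℕ → Prop} {A : Set ℕ} (hA : A.Infinite)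
    (hex : ∀ F B, ↑F ⊆ A → B ⊆ A ∩ above F → B.Infinite → ∃ B' ⊆ B, B'.Infinite ∧ good F B') :
    ∃ B : ℕ → Set ℕ, ∀ n, (B n).Infinite ∧ B n ⊆ A ∧ B (n + 1) ⊆ B n ∩ Ioi (sInf (B n)) ∧
      good ((Finset.range n).image fun k => sInf (B k)) (B n) := by
  classical
  have hex' : ∀ F B, ∃ B', ↑F ⊆ A → B ⊆ A ∩ above F → B.Infinite →
      B' ⊆ B ∧ B'.Infinite ∧ good F B' := by
    intro F B
    by_cases h : ↑F ⊆ A ∧ B ⊆ A ∩ above F ∧ B.Infinite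
    · obtain ⟨B', hB'⟩ := hex F B h.1 h.2.1 h.2.2
      exact ⟨B', fun _ _ _ => hB'⟩
    · exact ⟨B, fun h₁ h₂ h₃ => absurd ⟨h₁, h₂, h₃⟩ h⟩
  choose shrink hshrink using hex'
  let step : Finset ℕ × Set ℕ → Finset ℕ × Set ℕ := fun p =>
    (insert (sInf p.2) p.1, shrink (insert (sInf p.2) p.1) (p.2 ∩ Ioi (sInf p.2)))
  let state : ℕ → Finset ℕ × Set ℕ := fun n => step^[n] (∅, shrink ∅ A)
  have hstate : ∀ n, state (n + 1) = step (state n) :=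
    fun n => Function.iterate_succ_apply' step n _
  let Inv : Finset ℕ × Set ℕ → Prop := fun p => ↑p.1 ⊆ A ∧ p.2 ⊆ A ∩ above p.1 ∧ p.2.Infinite
  have hstep : ∀ p, Inv p → Inv (step p) ∧ (step p).2 ⊆ p.2 ∩ Ioi (sInf p.2) ∧
      good (step p).1 (step p).2 := by
    rintro ⟨F, B⟩ ⟨hFA, hBA, hBi⟩
    have hF' : ↑(insert (sInf B) F) ⊆ A := by
      rw [Finset.coe_insert]
      exact insert_subset (hBA (Nat.sInf_mem hBi.nonempty)).1 hFA
    have hB' : B ∩ Ioi (sInf B) ⊆ A ∩ above (insert (sInf B) F) := by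
      rw [above_insert]
      exact fun x hx => ⟨(hBA hx.1).1, hx.2, (hBA hx.1).2⟩
    obtain ⟨h₁, h₂, h₃⟩ := hshrink _ _ hF' hB' (by
      simpa [sdiff_eq, compl_Iic] using hBi.sdiff (finite_Iic (sInf B)))
    exact ⟨⟨hF', h₁.trans hB', h₂⟩, h₁, h₃⟩
  obtain ⟨h₁, h₂, h₃⟩ := hshrink ∅ A (by simp) (by simp) hA
  have hInv : ∀ n, Inv (state n) := by
    intro n
    induction n with
    | zero => exact ⟨by simp [state], by simpa [state] using h₁, h₂⟩
    | succ n ih => rw [hstate]; exact (hstep _ ih).1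
  have hF : ∀ n, (state n).1 = (Finset.range n).image fun k => sInf (state k).2 := by
    intro n
    induction n with
    | zero => rfl
    | succ n ih => rw [hstate, Finset.range_add_one, Finset.image_insert, ← ih]
  have hchain : ∀ n, (state (n + 1)).2 ⊆ (state n).2 ∩ Ioi (sInf (state n).2) := by
    intro n; rw [hstate]; exact (hstep _ (hInv n)).2.1
  have hgood : ∀ n, good (state n).1 (state n).2 := by
    rintro (_ | n)
    · exact h₃
    · rw [hstate]; exact (hstep _ (hInv n)).2.2
  exact ⟨fun n => (state n).2, fun n => ⟨(hInv n).2.2, fun x hx => ((hInv n).2.1 hx).1,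
    hchain n, hF n ▸ hgood n⟩⟩

/-- `D` is the range of `a n := sInf (B n)` for a fusion sequence `B`. For `u ⊆ D`, the tail
`D ∩ above u` lies in `B n` for the first `n` with `a n` above `u`, and `u ⊆ {a k | k < n}`. -/
theorem exists_fusion {Q : Finset ℕ → Set ℕ → Prop} (hQ : ∀ u ⦃B B'⦄, B' ⊆ B → Q u B → Q u B')
    {A : Set ℕ} (hA : A.Infinite)
    (hshrink : ∀ u B, ↑u ⊆ A → B ⊆ A ∩ above u → B.Infinite → ∃ B' ⊆ B, B'.Infinite ∧ Q u B') :
    ∃ D ⊆ A, D.Infinite ∧ ∀ u : Finset ℕ, ↑u ⊆ D → Q u (D ∩ above u) := by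
  classical
  obtain ⟨B, hB⟩ := exists_fusion_seq (good := fun F B => ∀ u ∈ F.powerset, Q u B) hA
    fun F B hF hB hBi => exists_infinite_subset_forall_mem hQ F.powerset hBi
      fun u hu B' hB' hB'i => by
        rw [Finset.mem_powerset] at hu
        exact hshrink u B' ((Finset.coe_subset.2 hu).trans hF)
          (hB'.trans (hB.trans (inter_subset_inter_right _ (above_anti hu)))) hB'i
  set a : ℕ → ℕ := fun n => sInf (B n)
  have hmem : ∀ n, a n ∈ B n := fun n => Nat.sInf_mem (hB n).1.nonempty
  have hanti : Antitone B := antitone_nat_of_succ_le fun n => (hB n).2.2.1.trans inter_subset_left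
  have ha : StrictMono a := strictMono_nat_of_lt_succ fun n => ((hB n).2.2.1 (hmem (n + 1))).2
  refine ⟨range a, range_subset_iff.2 fun n => (hB n).2.1 (hmem n),
    infinite_range_of_injective ha.injective, fun u hu => ?_⟩
  have hex : ∃ n, a n ∈ above u := ⟨u.sup id + 1, fun m hm =>
    (Finset.le_sup (f := id) hm).trans_lt (Nat.lt_succ_self _ |>.trans_le (ha.id_le _))⟩
  refine hQ u ?_ ((hB (Nat.find hex)).2.2.2 u (Finset.mem_powerset.2 fun x hx => ?_))
  · rintro _ ⟨⟨j, rfl⟩, hj⟩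
    exact hanti (Nat.find_min' hex hj) (hmem j)
  · obtain ⟨j, rfl⟩ := hu hx
    exact Finset.mem_image_of_mem a
      (Finset.mem_range.2 (ha.lt_iff_lt.1 (Nat.find_spec hex _ hx)))

def RamseyNull (S : Set (Set ℕ)) : Prop :=
  ∀ t A, A.Infinite → A ⊆ above t → ∃ B ⊆ A, B.Infinite ∧ ellentuckNbhd t B ⊆ Sᶜ

def CompletelyRamsey (S : Set (Set ℕ)) : Prop :=
  ∀ t A, A.Infinite → A ⊆ above t →
    ∃ B ⊆ A, B.Infinite ∧ (ellentuckNbhd t B ⊆ S ∨ ellentuckNbhd t B ⊆ Sᶜ)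

lemma ramseyNull_empty : RamseyNull ∅ := fun _ A hA _ => ⟨A, subset_rfl, hA, by simp⟩

lemma RamseyNull.mono {S S' : Set (Set ℕ)} (hS : RamseyNull S) (h : S' ⊆ S) : RamseyNull S' := by
  intro t A hA hAt
  obtain ⟨B, hBA, hB, hBS⟩ := hS t A hA hAt
  exact ⟨B, hBA, hB, hBS.trans (compl_subset_compl.2 h)⟩

lemma RamseyNull.union {S S' : Set (Set ℕ)} (hS : RamseyNull S) (hS' : RamseyNull S') :
    RamseyNull (S ∪ S') := by
  intro t A hA hAt
  obtain ⟨B, hBA, hB, hBS⟩ := hS t A hA hAt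
  obtain ⟨B', hB'B, hB', hB'S'⟩ := hS' t B hB (hBA.trans hAt)
  refine ⟨B', hB'B.trans hBA, hB', fun C hC => ?_⟩
  rw [compl_union]
  exact ⟨hBS (ellentuckNbhd_mono hB'B hC), hB'S' hC⟩

lemma exists_forall_ellentuckNbhd_subset_compl {S : ℕ → Set (Set ℕ)}
    (hS : ∀ i, RamseyNull (S i)) (T : Finset ℕ) {t : Finset ℕ} {B : Set ℕ} (hB : B.Infinite)
    (hBt : B ⊆ above t) : ∃ B' ⊆ B, B'.Infinite ∧ ∀ i ∈ T, ellentuckNbhd t B' ⊆ (S i)ᶜ :=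
  exists_infinite_subset_forall_mem (Q := fun i B => ellentuckNbhd t B ⊆ (S i)ᶜ)
    (fun _ _ _ h hB => (ellentuckNbhd_mono h).trans hB) T hB
    fun i _ B' hB' hB'i => hS i t B' hB'i (hB'.trans hBt)

/-- At the stem `s ∪ u` the fusion handles the families `S i` with `i ≤ max (s ∪ u)`; every
member of `S i` has an initial segment `t ⊇ s` with `i ≤ max t`. -/
lemma RamseyNull.iUnion {S : ℕ → Set (Set ℕ)} (hS : ∀ i, RamseyNull (S i)) :
    RamseyNull (⋃ i, S i) := by
  classical
  intro s A hA hAs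
  obtain ⟨D, hDA, hD, hDnull⟩ := exists_fusion
    (Q := fun u B => ∀ i ∈ Finset.Iic ((s ∪ u).sup id), ellentuckNbhd (s ∪ u) B ⊆ (S i)ᶜ)
    (fun u B B' h hB i hi => (ellentuckNbhd_mono h).trans (hB i hi)) hA
    fun u B _ hB hBi => exists_forall_ellentuckNbhd_subset_compl hS _ hBi <| by
      rw [above_union]
      exact fun x hx => ⟨hAs (hB hx).1, (hB hx).2⟩
  refine ⟨D, hDA, hD, ?_⟩
  rintro C ⟨hsC, hCD, hC⟩ hCS
  obtain ⟨i, hi⟩ := mem_iUnion.1 hCS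
  obtain ⟨t, hst, htC, hit, hCt⟩ := exists_initial_segment hC hsC i
  have hu : ↑(t \ s) ⊆ D := fun x hx => by
    rw [Finset.coe_sdiff] at hx
    exact hCD ⟨htC hx.1, hx.2⟩
  have key := hDnull (t \ s) hu i
  rw [Finset.union_sdiff_of_subset hst] at key
  refine key (Finset.mem_Iic.2 hit) ⟨htC, fun x hx => ⟨?_, ?_⟩, hC⟩ hi
  · exact hCD ⟨hx.1, fun hxs => hx.2 (Finset.mem_coe.2 (hst hxs))⟩
  · exact above_anti Finset.sdiff_subset (hCt hx)

def ellentuckInterior (S : Set (Set ℕ)) : Set (Set ℕ) :=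
  {C | ∃ t B, B ⊆ above t ∧ C ∈ ellentuckNbhd t B ∧ ellentuckNbhd t B ⊆ S}

/-- Finite sets are ignored: the Ellentuck topology lives on the infinite subsets of `ℕ`. -/
def IsEllentuckOpen (S : Set (Set ℕ)) : Prop :=
  ∀ C ∈ S, C.Infinite → C ∈ ellentuckInterior S

lemma ellentuckInterior_subset (S : Set (Set ℕ)) : ellentuckInterior S ⊆ S :=
  fun _ ⟨_, _, _, hC, hS⟩ => hS hC

lemma ellentuckInterior_mono {S S' : Set (Set ℕ)} (h : S ⊆ S') :
    ellentuckInterior S ⊆ ellentuckInterior S' :=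
  fun _ ⟨t, B, hB, hC, hS⟩ => ⟨t, B, hB, hC, hS.trans h⟩

lemma isEllentuckOpen_ellentuckInterior (S : Set (Set ℕ)) :
    IsEllentuckOpen (ellentuckInterior S) :=
  fun _ ⟨t, B, hB, hC, hS⟩ _ => ⟨t, B, hB, hC, fun _ hD => ⟨t, B, hB, hD, hS⟩⟩

lemma IsEllentuckOpen.union {S S' : Set (Set ℕ)} (hS : IsEllentuckOpen S)
    (hS' : IsEllentuckOpen S') : IsEllentuckOpen (S ∪ S') := by
  rintro C (hC | hC) hCi
  exacts [ellentuckInterior_mono subset_union_left (hS C hC hCi),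
    ellentuckInterior_mono subset_union_right (hS' C hC hCi)]

lemma isEllentuckOpen_iUnion {S : ℕ → Set (Set ℕ)} (hS : ∀ i, IsEllentuckOpen (S i)) :
    IsEllentuckOpen (⋃ i, S i) := by
  intro C hC hCi
  obtain ⟨i, hi⟩ := mem_iUnion.1 hC
  exact ellentuckInterior_mono (subset_iUnion S i) (hS i C hi hCi)

lemma isEllentuckOpen_of_inter_Iic {S : Set (Set ℕ)} (n : ℕ)
    (hS : ∀ C D, C ∩ Iic n = D ∩ Iic n → C ∈ S → D ∈ S) : IsEllentuckOpen S := by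
  intro C hCS hC
  obtain ⟨t, ht⟩ : ∃ t : Finset ℕ, ↑t = C ∩ Iic n :=
    ⟨_, ((finite_Iic n).inter_of_right C).coe_toFinset⟩
  refine ⟨t, C \ t, sdiff_subset_above_of_coe_eq_inter_Iic ht,
    ⟨ht ▸ inter_subset_left, subset_rfl, hC⟩, fun D ⟨htD, hDC, _⟩ => hS C D ?_ hCS⟩
  refine Subset.antisymm (fun x hx => ?_) fun x hx => ?_
  · exact ⟨htD (ht ▸ hx), hx.2⟩
  · by_contra hxt
    have hxC := (hDC ⟨hx.1, fun h => hxt (ht ▸ h)⟩).1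
    exact hxt ⟨hxC, hx.2⟩

section Galvin

variable {U : Set (Set ℕ)}

def Accepts (U : Set (Set ℕ)) (t : Finset ℕ) (X : Set ℕ) : Prop := ellentuckNbhd t X ⊆ U

def Rejects (U : Set (Set ℕ)) (t : Finset ℕ) (X : Set ℕ) : Prop :=
  ∀ Y ⊆ X, Y.Infinite → ¬ Accepts U t Y

lemma Accepts.mono {t : Finset ℕ} {X Y : Set ℕ} (h : Accepts U t X) (hYX : Y ⊆ X) :
    Accepts U t Y :=
  (ellentuckNbhd_mono hYX).trans h

lemma Rejects.mono {t : Finset ℕ} {X Y : Set ℕ} (h : Rejects U t X) (hYX : Y ⊆ X) :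
    Rejects U t Y :=
  fun Z hZ => h Z (hZ.trans hYX)

lemma exists_accepts_or_rejects (U : Set (Set ℕ)) (t : Finset ℕ) {X : Set ℕ} (hX : X.Infinite) :
    ∃ Y ⊆ X, Y.Infinite ∧ (Accepts U t Y ∨ Rejects U t Y) := by
  by_cases h : ∃ Y ⊆ X, Y.Infinite ∧ Accepts U t Y
  · obtain ⟨Y, hYX, hY, hacc⟩ := h
    exact ⟨Y, hYX, hY, .inl hacc⟩
  · push Not at h
    exact ⟨X, subset_rfl, hX, .inr h⟩

/-- Otherwise these `b` would form a subset of `X` accepting `t`: a member `C` of its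
neighbourhood lies in the neighbourhood of `insert b t`, for `b` the least element of `C \ t`. -/
lemma finite_setOf_accepts_insert {t : Finset ℕ} {X : Set ℕ} (h : Rejects U t X) :
    {b ∈ X | Accepts U (insert b t) (X ∩ Ioi b)}.Finite := by
  by_contra hinf
  refine h _ (sep_subset _ _) hinf fun C ⟨htC, hCY, hC⟩ => ?_
  have hne : (C \ t).Nonempty := (hC.sdiff t.finite_toSet).nonempty
  obtain ⟨-, hacc⟩ := hCY (Nat.sInf_mem hne)
  refine hacc ⟨?_, fun x hx => ?_, hC⟩
  · rw [Finset.coe_insert]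
    exact insert_subset (Nat.sInf_mem hne).1 htC
  · have hxt : x ∈ C \ t := ⟨hx.1, fun h => hx.2 (by simp [Finset.mem_coe.1 h])⟩
    refine ⟨(hCY hxt).1, lt_of_le_of_ne (Nat.sInf_le hxt) fun h => hx.2 ?_⟩
    simp [← h]

/-- A fusion removes, at every rejected stem `s ∪ u`, the finitely many one-point extensions
that are accepted; rejection then propagates from `s` to every stem, adding points in increasing
order. -/
lemma exists_forall_rejects {s : Finset ℕ} {D : Set ℕ} (hD : D.Infinite)
    (hdec : ∀ u : Finset ℕ, ↑u ⊆ D →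
      Accepts U (s ∪ u) (D ∩ above u) ∨ Rejects U (s ∪ u) (D ∩ above u))
    (hrej : Rejects U s D) :
    ∃ E ⊆ D, E.Infinite ∧ ∀ u : Finset ℕ, ↑u ⊆ E → Rejects U (s ∪ u) (E ∩ above u) := by
  classical
  obtain ⟨E, hED, hE, hnacc⟩ := exists_fusion
    (Q := fun u B => Rejects U (s ∪ u) (D ∩ above u) →
      ∀ b ∈ B, ¬ Accepts U (s ∪ insert b u) (D ∩ above (insert b u)))
    (fun u B B' h hB hrej b hb => hB hrej b (h hb)) hD
    fun u B _ hB hBi => by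
      by_cases hrej : Rejects U (s ∪ u) (D ∩ above u)
      · refine ⟨B \ {b ∈ D ∩ above u | Accepts U (insert b (s ∪ u)) (D ∩ above u ∩ Ioi b)},
          sdiff_subset, hBi.sdiff (finite_setOf_accepts_insert hrej),
          fun _ b hb hacc => hb.2 ⟨hB hb.1, ?_⟩⟩
        rwa [above_insert, Finset.union_insert, inter_comm (Ioi b), ← inter_assoc] at hacc
      · exact ⟨B, subset_rfl, hBi, fun h => absurd h hrej⟩
  have hrej_all : ∀ u : Finset ℕ, ↑u ⊆ E → Rejects U (s ∪ u) (D ∩ above u) := by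
    intro u
    refine Finset.induction_on_max u (fun _ => by simpa using hrej) fun a u hlt ih hu => ?_
    rw [Finset.coe_insert, insert_subset_iff] at hu
    have hau : ↑(insert a u) ⊆ D := by
      rw [Finset.coe_insert]
      exact insert_subset (hED hu.1) (hu.2.trans hED)
    exact (hdec _ hau).resolve_left (hnacc u hu.2 (ih hu.2) a ⟨hu.1, hlt⟩)
  exact ⟨E, hED, hE, fun u hu => (hrej_all u hu).mono (inter_subset_inter_left _ hED)⟩

lemma IsEllentuckOpen.ellentuckNbhd_subset_compl (hU : IsEllentuckOpen U) {s : Finset ℕ}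
    {E : Set ℕ} (hrej : ∀ u : Finset ℕ, ↑u ⊆ E → Rejects U (s ∪ u) (E ∩ above u)) :
    ellentuckNbhd s E ⊆ Uᶜ := by
  classical
  rintro C ⟨hsC, hCE, hC⟩ hCU
  obtain ⟨t, B, hBt, ⟨htC, hCB, -⟩, htU⟩ := hU C hCU hC
  have hu : ↑(t \ s) ⊆ E := fun x hx => by
    rw [Finset.coe_sdiff] at hx
    exact hCE ⟨htC hx.1, hx.2⟩
  have hrej' := hrej (t \ s) hu
  rw [Finset.union_sdiff_self_eq_union] at hrej'
  have hY : (C \ ↑s ∩ (C \ ↑t)).Infinite := by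
    rw [sdiff_inter_sdiff, ← Finset.coe_union]
    exact hC.sdiff (Finset.finite_toSet _)
  refine hrej' _ (fun x hx => ⟨hCE hx.1, above_anti Finset.sdiff_subset (hBt (hCB hx.2))⟩) hY ?_
  rintro D ⟨hstD, hDY, hD⟩
  refine htU ⟨(Finset.coe_subset.2 Finset.subset_union_right).trans hstD, fun x hx => hCB ?_, hD⟩
  by_cases hxs : x ∈ s
  · exact ⟨hsC hxs, hx.2⟩
  · exact (hDY ⟨hx.1, by simp [hxs, Finset.mem_coe.not.1 hx.2]⟩).2

theorem IsEllentuckOpen.completelyRamsey (hU : IsEllentuckOpen U) : CompletelyRamsey U := by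
  intro s A hA _
  obtain ⟨D, hDA, hD, hdec⟩ := exists_fusion
    (fun u B B' h hB => hB.imp (·.mono h) (·.mono h)) hA
    fun u B _ _ hB => exists_accepts_or_rejects U (s ∪ u) hB
  rcases (by simpa using hdec ∅ (by simp) : Accepts U s D ∨ Rejects U s D)
    with hacc | hrej
  · exact ⟨D, hDA, hD, .inl hacc⟩
  · obtain ⟨E, hED, hE, hrejE⟩ := exists_forall_rejects hD hdec hrej
    exact ⟨E, hED.trans hDA, hE, .inr (hU.ellentuckNbhd_subset_compl hrejE)⟩

end Galvin

lemma IsEllentuckOpen.ramseyNull_compl_diff_ellentuckInterior {U : Set (Set ℕ)}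
    (hU : IsEllentuckOpen U) : RamseyNull (Uᶜ \ ellentuckInterior Uᶜ) := by
  intro s A hA hAs
  obtain ⟨B, hBA, hB, hB'⟩ :=
    (hU.union (isEllentuckOpen_ellentuckInterior Uᶜ)).completelyRamsey s A hA hAs
  refine ⟨B, hBA, hB, ?_⟩
  rcases hB' with h | h
  · exact h.trans fun C hC ⟨hCU, hCint⟩ => hC.elim hCU hCint
  · refine fun C hC _ => h hC (.inr ⟨s, B, hBA.trans hAs, hC, fun D hD => ?_⟩)
    exact fun hDU => h hD (.inl hDU)

def IsAlmostEllentuckOpen (T : Set (Set ℕ)) : Prop :=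
  ∃ U, IsEllentuckOpen U ∧ RamseyNull (T ∆ U)

lemma IsEllentuckOpen.isAlmostEllentuckOpen {U : Set (Set ℕ)} (hU : IsEllentuckOpen U) :
    IsAlmostEllentuckOpen U :=
  ⟨U, hU, by simpa using ramseyNull_empty⟩

lemma IsAlmostEllentuckOpen.compl {T : Set (Set ℕ)} (hT : IsAlmostEllentuckOpen T) :
    IsAlmostEllentuckOpen Tᶜ := by
  obtain ⟨U, hU, hTU⟩ := hT
  refine ⟨ellentuckInterior Uᶜ, isEllentuckOpen_ellentuckInterior _,
    (hTU.union hU.ramseyNull_compl_diff_ellentuckInterior).mono ?_⟩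
  calc Tᶜ ∆ ellentuckInterior Uᶜ ⊆ Tᶜ ∆ Uᶜ ∪ Uᶜ ∆ ellentuckInterior Uᶜ := symmDiff_triangle _ _ _
    _ = T ∆ U ∪ (Uᶜ \ ellentuckInterior Uᶜ) := by
      rw [compl_symmDiff_compl, symmDiff_of_ge (ellentuckInterior_subset _)]

lemma isAlmostEllentuckOpen_iUnion {T : ℕ → Set (Set ℕ)}
    (hT : ∀ i, IsAlmostEllentuckOpen (T i)) : IsAlmostEllentuckOpen (⋃ i, T i) := by
  choose U hU hTU using hT
  exact ⟨⋃ i, U i, isEllentuckOpen_iUnion hU,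
    (RamseyNull.iUnion hTU).mono iUnion_symmDiff_iUnion_subset⟩

lemma IsAlmostEllentuckOpen.completelyRamsey {T : Set (Set ℕ)} (hT : IsAlmostEllentuckOpen T) :
    CompletelyRamsey T := by
  obtain ⟨U, hU, hTU⟩ := hT
  intro s A hA hAs
  obtain ⟨B, hBA, hB, hBnull⟩ := hTU s A hA hAs
  obtain ⟨B', hB'B, hB', hB'U⟩ := hU.completelyRamsey s B hB (hBA.trans hAs)
  have hnull : ellentuckNbhd s B' ⊆ (T ∆ U)ᶜ := (ellentuckNbhd_mono hB'B).trans hBnull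
  refine ⟨B', hB'B.trans hBA, hB', hB'U.imp (fun h C hC => ?_) fun h C hC hCT => ?_⟩
  · by_contra hCT
    exact hnull hC (Or.inr ⟨h hC, hCT⟩)
  · exact hnull hC (Or.inl ⟨hCT, h hC⟩)

/-- The σ-algebra of sets with the Baire property in the Ellentuck topology, whose meagre sets
are the Ramsey-null ones. -/
abbrev ellentuckBaire : MeasurableSpace (Set ℕ) where
  MeasurableSet' := IsAlmostEllentuckOpen
  measurableSet_empty := IsEllentuckOpen.isAlmostEllentuckOpen fun _ h => h.elim
  measurableSet_compl _ := IsAlmostEllentuckOpen.compl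
  measurableSet_iUnion _ := isAlmostEllentuckOpen_iUnion

theorem measurable_boolIndicator :
    Measurable[ellentuckBaire] fun C : Set ℕ => C.boolIndicator := by
  let _ : MeasurableSpace (Set ℕ) := ellentuckBaire
  refine measurable_pi_lambda _ fun n s _ => IsEllentuckOpen.isAlmostEllentuckOpen <|
    isEllentuckOpen_of_inter_Iic n fun C D h hC => ?_
  have hn : n ∈ C ↔ n ∈ D := by simpa using congrArg (n ∈ ·) h
  have : C.boolIndicator n = D.boolIndicator n := by
    rw [Bool.eq_iff_iff, ← mem_iff_boolIndicator, ← mem_iff_boolIndicator, hn]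
  rwa [mem_preimage, ← this]

theorem completelyRamsey_preimage_boolIndicator {S : Set (ℕ → Bool)} (hS : MeasurableSet S) :
    CompletelyRamsey ((fun C : Set ℕ => C.boolIndicator) ⁻¹' S) :=
  IsAlmostEllentuckOpen.completelyRamsey (measurable_boolIndicator hS)

/-- The set `T i` is decided on a tail `D ∩ above u` with `#u = i`, and invariance under finite
changes carries the decision back to `D`. -/
theorem exists_infinite_forall_mem_iff {T : ℕ → Set (Set ℕ)} (hT : ∀ i, CompletelyRamsey (T i))
    (hinv : ∀ i C s, C.Infinite → s.Finite → (C \ s ∈ T i ↔ C ∈ T i)) :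
    ∃ D : Set ℕ, D.Infinite ∧ ∀ i, ∀ C ⊆ D, C.Infinite → (C ∈ T i ↔ D ∈ T i) := by
  obtain ⟨D, -, hD, hhom⟩ := exists_fusion
    (Q := fun u B => ellentuckNbhd ∅ B ⊆ T u.card ∨ ellentuckNbhd ∅ B ⊆ (T u.card)ᶜ)
    (fun u B B' h hB => hB.imp ((ellentuckNbhd_mono h).trans ·) ((ellentuckNbhd_mono h).trans ·))
    infinite_univ fun u B _ _ hB => hT u.card ∅ B hB (by simp)
  refine ⟨D, hD, fun i => ?_⟩
  obtain ⟨u, hu, rfl⟩ := hD.exists_subset_card_eq i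
  have hside : ∀ C ⊆ D, C.Infinite →
      (C ∈ T u.card ↔ ellentuckNbhd ∅ (D ∩ above u) ⊆ T u.card) := by
    intro C hCD hC
    have hC' : C \ (above u)ᶜ ∈ ellentuckNbhd ∅ (D ∩ above u) := by
      rw [ellentuckNbhd_empty, sdiff_compl]
      exact ⟨inter_subset_inter_left _ hCD, hC.sdiff (finite_compl_above u) |>.mono (by simp)⟩
    rw [← hinv _ C _ hC (finite_compl_above u)]
    rcases hhom u hu with h | h
    · exact iff_of_true (h hC') h
    · exact iff_of_false (h hC') fun h' => h hC' (h' hC')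
  exact fun C hCD hC => (hside C hCD hC).trans (hside D subset_rfl hD).symm

lemma e0_boolIndicator_sdiff {C s : Set ℕ} (hs : s.Finite) :
    E0 (C \ s).boolIndicator C.boolIndicator := by
  rw [E0, ← Nat.cofinite_eq_atTop]
  filter_upwards [hs.eventually_cofinite_notMem] with n hn
  rw [Bool.eq_iff_iff, ← mem_iff_boolIndicator, ← mem_iff_boolIndicator]
  simp [hn]

lemma pRel_boolIndicator_iff {C : Set ℕ} {e : ℕ → Bool} :
    PRel C.boolIndicator e ↔
      (C ∩ {n | e n = false}).Infinite ∧ (C ∩ {n | e n = true}).Infinite := by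
  simp only [PRel, ← mem_iff_boolIndicator]
  rfl

noncomputable def infiniteBoolIndicator (C : Set ℕ) (hC : C.Infinite) :
    {A : ℕ → Bool // {n | A n = true}.Infinite} :=
  ⟨C.boolIndicator, by simpa [← mem_iff_boolIndicator]⟩

theorem exists_infinite_forall_eq_of_measurable
    (f : {A : ℕ → Bool // {n | A n = true}.Infinite} → (ℕ → Bool)) (hf : Measurable f)
    (hinv : ∀ A A', E0 A.1 A'.1 → f A = f A') :
    ∃ D : Set ℕ, ∃ hD : D.Infinite, ∀ C (_ : C ⊆ D) (hC : C.Infinite),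
      f (infiniteBoolIndicator C hC) = f (infiniteBoolIndicator D hD) := by
  have hX : MeasurableSet {x : ℕ → Bool | {n | x n = true}.Infinite} := by
    simp_rw [← Nat.frequently_atTop_iff_infinite, Filter.frequently_atTop]
    exact measurableSet_setOfPred.2 (by fun_prop)
  let T i := (fun C : Set ℕ => C.boolIndicator) ⁻¹' (Subtype.val '' {A | f A i = true})
  have hmem : ∀ i C (hC : C.Infinite), C ∈ T i ↔ f (infiniteBoolIndicator C hC) i = true := by
    intro i C hC
    simp only [T, infiniteBoolIndicator, mem_preimage, mem_image, mem_ofPred_eq, Subtype.exists,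
      exists_and_right, exists_eq_right]
    exact ⟨fun ⟨_, h⟩ => h, fun h => ⟨(infiniteBoolIndicator C hC).2, h⟩⟩
  obtain ⟨D, hD, hhom⟩ := exists_infinite_forall_mem_iff (T := T)
    (fun i => completelyRamsey_preimage_boolIndicator
      (hX.subtype_image ((measurable_pi_apply i).comp hf (measurableSet_singleton true))))
    fun i C s hC hs => by
      rw [hmem i _ (hC.sdiff hs), hmem i _ hC, hinv (infiniteBoolIndicator _ (hC.sdiff hs))
        (infiniteBoolIndicator _ hC) (e0_boolIndicator_sdiff hs)]
  refine ⟨D, hD, fun C hCD hC => funext fun i => ?_⟩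
  rw [Bool.eq_iff_iff, ← hmem, ← hmem]
  exact hhom i C hCD hC

/-- `P` admits no Borel `E₀`-invariant uniformization on the space
`X = [ℕ]^{ℵ₀}` of infinite subsets of `ℕ`. -/
theorem stmt3 :
    ¬ ∃ f : {A : ℕ → Bool // {n | A n = true}.Infinite} → (ℕ → Bool),
      Measurable f ∧ (∀ A, PRel A.1 (f A)) ∧
        ∀ A A', E0 A.1 A'.1 → f A = f A' := by
  rintro ⟨f, hf, hP, hinv⟩
  obtain ⟨D, hD, hconst⟩ := exists_infinite_forall_eq_of_measurable f hf hinv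
  set e := f (infiniteBoolIndicator D hD)
  have hDe : (D ∩ {n | e n = true}).Infinite :=
    (pRel_boolIndicator_iff.1 (hP (infiniteBoolIndicator D hD))).2
  have h := (pRel_boolIndicator_iff.1 (hP (infiniteBoolIndicator _ hDe))).1
  rw [hconst _ inter_subset_left hDe] at h
  have hempty : D ∩ {n | e n = true} ∩ {n | e n = false} = ∅ := by
    ext n
    simp +contextual
  exact h (hempty ▸ finite_empty)
end

section
/- Identify 2^ℕ with the Cantor group (ℤ/2ℤ)^ℕ with pointwise addition, and let μ be the Haar (uniform product) measure. Let A ⊆ 2^ℕ be an Fσ set with μ(A) = 1 which is meager. Define P ⊆ 2^ℕ × 2^ℕ by P(x, y) iff there exists x' E₀ x with x' + y ∈ A. Then P is Fσ, E₀-invariant in the first coordinate, μ(P_x) = 1 for all x, and P admits no Borel E₀-invariant uniformization. -/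
open Set MeasureTheory

/-- Addition in the Cantor group `(ℤ/2ℤ)^ℕ`, i.e. pointwise xor. -/
def cadd (x y : ℕ → Bool) : ℕ → Bool := fun n => xor (x n) (y n)

/-- The set `P(x, y) ⟺ ∃ x' E₀ x, x' + y ∈ A`. -/
def PA (A : Set (ℕ → Bool)) : Set ((ℕ → Bool) × (ℕ → Bool)) :=
  {p | ∃ x', E0 x' p.1 ∧ cadd x' p.2 ∈ A}

/-!
Since `x' E₀ x` iff `x' + y E₀ x + y`, `P` is the preimage of the `E₀`-saturation `[A]` of `A`
under `(x, y) ↦ x + y`, and `[A]` is a countable union of translates of `A`. Hence `P` is `Fσ`,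
each section `{x | P(x, y)} = [A] + y` is meagre, and each section `{y | P(x, y)} ⊇ A + x` is
conull by translation invariance of `μ`. An `E₀`-invariant Borel `f` is constant, say `y₀`, on a
comeagre set by generic ergodicity, so a uniformization `f` would put that comeagre set inside the
meagre section `{x | P(x, y₀)}`.
-/

open Filter Topology

lemma e0_iff_finite {x y : ℕ → Bool} : E0 x y ↔ {n | x n ≠ y n}.Finite := by
  rw [E0, ← Nat.cofinite_eq_atTop, eventually_cofinite]

lemma e0_finset_piecewise (s : Finset ℕ) (x y : ℕ → Bool) : E0 (s.piecewise x y) y :=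
  e0_iff_finite.2 <| s.finite_toSet.subset fun n hn => by
    by_contra h
    exact hn (s.piecewise_eq_of_notMem _ _ h)

namespace E0

variable {x y z : ℕ → Bool}

lemma refl (x : ℕ → Bool) : E0 x x := Eventually.of_forall fun _ => rfl

lemma symm (h : E0 x y) : E0 y x := h.mono fun _ => Eq.symm

lemma trans (h₁ : E0 x y) (h₂ : E0 y z) : E0 x z := (h₁.and h₂).mono fun _ h => h.1.trans h.2

lemma cadd_right (h : E0 x y) (z : ℕ → Bool) : E0 (cadd x z) (cadd y z) :=
  h.mono fun n hn => by simp only [cadd, hn]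

end E0

lemma cadd_comm (x y : ℕ → Bool) : cadd x y = cadd y x :=
  funext fun _ => Bool.xor_comm _ _

lemma cadd_involutive (g : ℕ → Bool) : Function.Involutive (cadd g) :=
  fun _ => funext fun _ => by simp [cadd]

lemma cadd_cadd_cancel_right (x y : ℕ → Bool) : cadd (cadd x y) y = x :=
  funext fun _ => by simp [cadd]

lemma continuous_cadd : Continuous fun p : (ℕ → Bool) × (ℕ → Bool) => cadd p.1 p.2 :=
  continuous_pi fun n =>
    show Continuous ((fun q : Bool × Bool => xor q.1 q.2) ∘
        fun p : (ℕ → Bool) × (ℕ → Bool) => (p.1 n, p.2 n)) from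
      continuous_of_discreteTopology.comp (by fun_prop)

lemma continuous_cadd_left (g : ℕ → Bool) : Continuous (cadd g) :=
  continuous_cadd.comp (continuous_const.prodMk continuous_id)

lemma measurable_cadd_left (g : ℕ → Bool) : Measurable (cadd g) :=
  (continuous_cadd_left g).measurable

lemma IsMeagre.preimage_cadd {B : Set (ℕ → Bool)} (h : IsMeagre B) (g : ℕ → Bool) :
    IsMeagre (cadd g ⁻¹' B) :=
  h.preimage_of_isOpenMap (continuous_cadd_left g) fun U hU => by
    rw [(cadd_involutive g).image_eq_preimage_symm]
    exact hU.preimage (continuous_cadd_left g)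

def finsetIndicator (s : Finset ℕ) : ℕ → Bool := fun n => decide (n ∈ s)

lemma e0_cadd_finsetIndicator (s : Finset ℕ) (x : ℕ → Bool) : E0 (cadd (finsetIndicator s) x) x :=
  e0_iff_finite.2 <| s.finite_toSet.subset fun n hn => by
    by_contra h
    exact hn (by simp [cadd, finsetIndicator, show n ∉ s from h])

lemma E0.exists_eq_cadd_finsetIndicator {x' x : ℕ → Bool} (h : E0 x' x) :
    ∃ s : Finset ℕ, x' = cadd (finsetIndicator s) x := by
  refine ⟨(e0_iff_finite.1 h).toFinset, funext fun n => ?_⟩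
  cases hx' : x' n <;> cases hx : x n <;> simp [cadd, finsetIndicator, hx', hx]

def e0Saturation (B : Set (ℕ → Bool)) : Set (ℕ → Bool) := {x | ∃ x', E0 x' x ∧ x' ∈ B}

lemma e0Saturation_eq_iUnion (B : Set (ℕ → Bool)) :
    e0Saturation B = ⋃ s : Finset ℕ, cadd (finsetIndicator s) ⁻¹' B := by
  ext x
  simp only [e0Saturation, mem_ofPred_eq, mem_iUnion, mem_preimage]
  constructor
  · rintro ⟨x', hx', hB⟩
    obtain ⟨s, rfl⟩ := hx'.exists_eq_cadd_finsetIndicator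
    exact ⟨s, hB⟩
  · rintro ⟨s, hB⟩
    exact ⟨_, e0_cadd_finsetIndicator s x, hB⟩

lemma IsMeagre.e0Saturation {B : Set (ℕ → Bool)} (h : IsMeagre B) : IsMeagre (e0Saturation B) := by
  rw [e0Saturation_eq_iUnion]
  exact isMeagre_iUnion fun s => h.preimage_cadd _

lemma PA_eq_preimage_e0Saturation (A : Set (ℕ → Bool)) :
    PA A = (fun p : (ℕ → Bool) × (ℕ → Bool) => cadd p.1 p.2) ⁻¹' e0Saturation A := by
  ext ⟨x, y⟩
  constructor
  · rintro ⟨x', hx', hA⟩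
    exact ⟨_, hx'.cadd_right y, hA⟩
  · rintro ⟨z, hz, hA⟩
    refine ⟨cadd z y, ?_, by rwa [cadd_cadd_cancel_right]⟩
    simpa only [cadd_cadd_cancel_right] using hz.cadd_right y

lemma isMeagre_setOf_mem_PA {A : Set (ℕ → Bool)} (hA : IsMeagre A) (y : ℕ → Bool) :
    IsMeagre {x | (x, y) ∈ PA A} := by
  have h : {x | (x, y) ∈ PA A} = cadd y ⁻¹' e0Saturation A := by
    ext x
    simp [PA_eq_preimage_e0Saturation, cadd_comm x y]
  rw [h]
  exact hA.e0Saturation.preimage_cadd y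

lemma exists_isClosed_iUnion_eq_PA {A : Set (ℕ → Bool)}
    (hA : ∃ F : ℕ → Set (ℕ → Bool), (∀ n, IsClosed (F n)) ∧ A = ⋃ n, F n) :
    ∃ F : ℕ → Set ((ℕ → Bool) × (ℕ → Bool)), (∀ n, IsClosed (F n)) ∧ PA A = ⋃ n, F n := by
  obtain ⟨F, hF, rfl⟩ := hA
  obtain ⟨e, he⟩ := exists_surjective_nat (Finset ℕ × ℕ)
  let G : Finset ℕ × ℕ → Set ((ℕ → Bool) × (ℕ → Bool)) := fun i =>
    (fun p => cadd (finsetIndicator i.1) (cadd p.1 p.2)) ⁻¹' F i.2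
  refine ⟨fun k => G (e k),
    fun k => (hF _).preimage ((continuous_cadd_left _).comp continuous_cadd), ?_⟩
  rw [he.iUnion_comp G, PA_eq_preimage_e0Saturation, e0Saturation_eq_iUnion]
  ext p
  simp [G]

lemma Finset.restrict_preimage_singleton_restrict {ι : Type*} (s : Finset ι) (f : ι → Bool) :
    (s.restrict : (ι → Bool) → s → Bool) ⁻¹' {s.restrict f} = {y | ∀ i ∈ s, y i = f i} := by
  ext y
  simp [funext_iff]

/-- Cylinders over finitely many coordinates determine the finite-dimensional marginals, and a
finite measure is the projective limit of its marginals. -/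
theorem MeasureTheory.Measure.ext_of_eq_on_basic_cylinders {ι : Type*}
    {μ ν : Measure (ι → Bool)} [IsFiniteMeasure μ]
    (h : ∀ (s : Finset ι) (f : ι → Bool),
      μ {y | ∀ i ∈ s, y i = f i} = ν {y | ∀ i ∈ s, y i = f i}) : μ = ν := by
  classical
  refine IsProjectiveLimit.unique (P := fun I => μ.map I.restrict) (fun _ => rfl) fun I => ?_
  refine Measure.ext_of_singleton fun g => ?_
  obtain ⟨f, rfl⟩ : ∃ f : ι → Bool, I.restrict f = g :=
    ⟨fun i => if hi : i ∈ I then g ⟨i, hi⟩ else false, by ext; simp⟩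
  simp only [Measure.map_apply (Finset.measurable_restrict I) (measurableSet_singleton _),
    Finset.restrict_preimage_singleton_restrict, h]

lemma map_cadd_eq_self {μ : Measure (ℕ → Bool)} [IsFiniteMeasure μ]
    (hμ : ∀ (s : Finset ℕ) (f : ℕ → Bool),
      μ {y | ∀ n ∈ s, y n = f n} = (2 : ENNReal)⁻¹ ^ s.card)
    (g : ℕ → Bool) : μ.map (cadd g) = μ := by
  refine (Measure.ext_of_eq_on_basic_cylinders fun s f => ?_).symm
  have h : cadd g ⁻¹' {y | ∀ n ∈ s, y n = f n} = {y | ∀ n ∈ s, y n = cadd g f n} := by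
    ext y
    refine forall₂_congr fun n _ => ?_
    simp only [cadd]
    cases g n <;> cases y n <;> cases f n <;> decide
  have hmeas : MeasurableSet {y : ℕ → Bool | ∀ n ∈ s, y n = f n} :=
    Finset.restrict_preimage_singleton_restrict s f ▸
      Finset.measurable_restrict s (measurableSet_singleton _)
  rw [Measure.map_apply (measurable_cadd_left g) hmeas, h, hμ, hμ]

lemma measure_setOf_mem_PA {μ : Measure (ℕ → Bool)} [IsProbabilityMeasure μ]
    (hμ : ∀ (s : Finset ℕ) (f : ℕ → Bool),
      μ {y | ∀ n ∈ s, y n = f n} = (2 : ENNReal)⁻¹ ^ s.card)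
    {A : Set (ℕ → Bool)} (hAmeas : MeasurableSet A) (hA : μ A = 1) (x : ℕ → Bool) :
    μ {y | (x, y) ∈ PA A} = 1 := by
  refine le_antisymm prob_le_one ?_
  calc (1 : ENNReal) = μ.map (cadd x) A := by rw [map_cadd_eq_self hμ, hA]
    _ = μ (cadd x ⁻¹' A) := Measure.map_apply (measurable_cadd_left x) hAmeas
    _ ≤ μ {y | (x, y) ∈ PA A} := measure_mono fun y hy => ⟨x, E0.refl x, hy⟩

theorem BaireMeasurableSet.isMeagre_or_isMeagre_compl_of_E0_invariant {S : Set (ℕ → Bool)}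
    (hS : BaireMeasurableSet S) (hinv : ∀ x x', E0 x x' → x ∈ S → x' ∈ S) :
    IsMeagre S ∨ IsMeagre Sᶜ := by
  -- `S` is comeagre in a basic cylinder `C` unless it is meagre, and every `E₀`-class meets `C`.
  obtain ⟨U, hU, hSU⟩ := hS.residualEq_isOpen
  have hSU' := eventuallyEq_set.1 hSU
  rcases U.eq_empty_or_nonempty with rfl | ⟨x, hx⟩
  · exact .inl (hSU'.mono fun y hy hyS => hy.1 hyS)
  obtain ⟨I, u, hxu, hIU⟩ := isOpen_pi_iff.1 hU x hx
  have hC : IsMeagre ({y | ∀ i ∈ I, y i = x i} \ S) :=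
    hSU'.mono fun y hy hyCS =>
      hyCS.2 (hy.2 (hIU fun i hi => (hyCS.1 i hi).symm ▸ (hxu i hi).2))
  have hcover : Sᶜ ⊆ e0Saturation ({y | ∀ i ∈ I, y i = x i} \ S) := fun y hy =>
    ⟨I.piecewise x y, e0_finset_piecewise I x y, fun i hi => I.piecewise_eq_of_mem _ _ hi,
      fun h => hy (hinv _ _ (e0_finset_piecewise I x y) h)⟩
  exact .inr (hC.e0Saturation.mono hcover)

theorem exists_eventually_residual_eq_of_E0_invariant {ι : Type*} [Countable ι]
    {f : (ℕ → Bool) → ι → Bool} (hf : Measurable f) (hinv : ∀ x x', E0 x x' → f x = f x') :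
    ∃ y, ∀ᶠ x in residual (ℕ → Bool), f x = y := by
  have hcoord : ∀ i, ∃ b : Bool, ∀ᶠ x in residual (ℕ → Bool), f x i = b := by
    intro i
    have hS : BaireMeasurableSet {x | f x i = true} :=
      ((measurable_pi_apply i).comp hf (measurableSet_singleton true)).baireMeasurableSet
    rcases hS.isMeagre_or_isMeagre_compl_of_E0_invariant
      (fun x x' h (hx : f x i = true) => show f x' i = true from hinv x x' h ▸ hx) with h | h
    · exact ⟨false, Eventually.mono h fun x (hx : ¬f x i = true) => Bool.eq_false_iff.2 hx⟩
    · rw [IsMeagre, compl_compl] at h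
      exact ⟨true, h⟩
  choose y hy using hcoord
  exact ⟨y, (eventually_countable_forall.2 hy).mono fun x hx => funext hx⟩

/-- If `A` is `Fσ`, `μ`-conull and meager (where `μ` is the Haar = uniform product
measure on the Cantor group), then `P(x,y) ⟺ ∃ x' E₀ x, x' + y ∈ A` is `Fσ`, `E₀`-invariant in
the first coordinate, has `μ`-conull sections, and admits no Borel `E₀`-invariant
uniformization. -/
theorem stmt4 (μ : Measure (ℕ → Bool)) [IsProbabilityMeasure μ]
    (hμ : ∀ (s : Finset ℕ) (f : ℕ → Bool),
      μ {y | ∀ n ∈ s, y n = f n} = (2 : ENNReal)⁻¹ ^ s.card)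
    (A : Set (ℕ → Bool))
    (hAFsigma : ∃ F : ℕ → Set (ℕ → Bool), (∀ n, IsClosed (F n)) ∧ A = ⋃ n, F n)
    (hAconull : μ A = 1) (hAmeager : IsMeagre A) :
    (∃ F : ℕ → Set ((ℕ → Bool) × (ℕ → Bool)),
        (∀ n, IsClosed (F n)) ∧ PA A = ⋃ n, F n) ∧
    (∀ x x', E0 x x' → ∀ y, ((x, y) ∈ PA A ↔ (x', y) ∈ PA A)) ∧
    (∀ x, μ {y | (x, y) ∈ PA A} = 1) ∧
    ¬ ∃ f : (ℕ → Bool) → (ℕ → Bool), Measurable f ∧ (∀ x, (x, f x) ∈ PA A) ∧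
        ∀ x x', E0 x x' → f x = f x' := by
  have hAmeas : MeasurableSet A := by
    obtain ⟨F, hF, rfl⟩ := hAFsigma
    exact .iUnion fun n => (hF n).measurableSet
  refine ⟨exists_isClosed_iUnion_eq_PA hAFsigma, fun x x' h y => ?_,
    measure_setOf_mem_PA hμ hAmeas hAconull, ?_⟩
  · exact ⟨fun ⟨z, hz, hA⟩ => ⟨z, hz.trans h, hA⟩, fun ⟨z, hz, hA⟩ => ⟨z, hz.trans h.symm, hA⟩⟩
  · rintro ⟨f, hf, hfP, hfinv⟩
    obtain ⟨y₀, hy₀⟩ := exists_eventually_residual_eq_of_E0_invariant hf hfinv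
    exact not_isMeagre_of_mem_residual (hy₀.mono fun x hx => hx ▸ hfP x)
      (isMeagre_setOf_mem_PA hAmeager y₀)
end

section
/- Identify 2^ℕ with the Cantor group (ℤ/2ℤ)^ℕ with Haar measure μ, and let B ⊆ 2^ℕ be a Gδ set which is comeager and has μ(B) = 0. Define Q ⊆ 2^ℕ × 2^ℕ by Q(x, y) iff for all x' E₀ x, x' + y ∈ B. Then Q is Gδ, E₀-invariant in the first coordinate, Q_x is comeager for all x, and Q admits no Borel E₀-invariant uniformization. -/
open Set MeasureTheory

/-- The set `Q(x, y) ⟺ ∀ x' E₀ x, x' + y ∈ B`. -/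
def QB (B : Set (ℕ → Bool)) : Set ((ℕ → Bool) × (ℕ → Bool)) :=
  {p | ∀ x', E0 x' p.1 → cadd x' p.2 ∈ B}

section Auxiliary

open MeasurableSpace ProbabilityTheory

lemma stmt5_isGδ_preimage {X Y : Type*} [TopologicalSpace X] [TopologicalSpace Y]
    {f : X → Y} (hf : Continuous f) {B : Set Y} (h : IsGδ B) : IsGδ (f ⁻¹' B) := by
  obtain ⟨T, hTo, hTc, rfl⟩ := h
  refine ⟨(f ⁻¹' ·) '' T, ?_, hTc.image _, ?_⟩
  · rintro t ⟨u, hu, rfl⟩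
    exact (hTo u hu).preimage hf
  · rw [sInter_image, preimage_sInter]

lemma stmt5_bxor1 : ∀ a b c : Bool, xor a c = b ↔ a = xor b c := by decide
lemma stmt5_bxor2 : ∀ a b : Bool, xor a (xor a b) = b := by decide
lemma stmt5_bxor3 : ∀ a b : Bool, a ≠ b → a = xor true b := by decide

lemma stmt5_cont1 (c : ℕ → Bool) : Continuous fun p : (ℕ → Bool) × (ℕ → Bool) =>
    fun n => xor (c n) (xor (p.1 n) (p.2 n)) := by
  refine continuous_pi fun n => ?_
  have h1 : Continuous fun q : Bool × Bool => xor (c n) (xor q.1 q.2) :=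
    continuous_of_discreteTopology
  have h2 : Continuous fun p : (ℕ → Bool) × (ℕ → Bool) => ((p.1 n, p.2 n) : Bool × Bool) :=
    ((continuous_apply n).comp continuous_fst).prodMk
      ((continuous_apply n).comp continuous_snd)
  exact h1.comp h2

lemma stmt5_cont2 (z : ℕ → Bool) :
    Continuous fun y : ℕ → Bool => fun n => xor (z n) (y n) := by
  refine continuous_pi fun n => ?_
  have h1 : Continuous fun b : Bool => xor (z n) b := continuous_of_discreteTopology
  exact h1.comp (continuous_apply n)

lemma E0_refl (x : ℕ → Bool) : E0 x x := Filter.Eventually.of_forall fun _ => rfl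

lemma E0_symm {x y : ℕ → Bool} (h : E0 x y) : E0 y x :=
  Filter.Eventually.mono h fun _ e => e.symm

lemma E0_trans {x y z : ℕ → Bool} (h1 : E0 x y) (h2 : E0 y z) : E0 x z :=
  Filter.Eventually.mono (Filter.Eventually.and h1 h2) fun _ e => e.1.trans e.2

lemma stmt5_QB_eq (B : Set (ℕ → Bool)) : QB B = ⋂ (s : Finset ℕ),
    (fun p : (ℕ → Bool) × (ℕ → Bool) => fun n => xor (decide (n ∈ s)) (xor (p.1 n) (p.2 n)))
      ⁻¹' B := by
  ext p
  simp only [QB, mem_setOf_eq, mem_iInter, mem_preimage]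
  constructor
  · intro h s
    have he : E0 (fun n => xor (decide (n ∈ s)) (p.1 n)) p.1 := by
      refine Filter.eventually_atTop.2 ⟨s.sup id + 1, fun n hn => ?_⟩
      have hns : n ∉ s := fun hm => by
        have : n ≤ s.sup id := by simpa using Finset.le_sup (f := id) hm
        omega
      simp [hns]
    have := h _ he
    have heq : cadd (fun n => xor (decide (n ∈ s)) (p.1 n)) p.2
        = fun n => xor (decide (n ∈ s)) (xor (p.1 n) (p.2 n)) :=
      funext fun n => Bool.xor_assoc _ _ _
    rwa [heq] at this
  · intro h x' hx'
    obtain ⟨N, hN⟩ := Filter.eventually_atTop.1 hx'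
    classical
    set s : Finset ℕ := (Finset.range N).filter (fun n => x' n ≠ p.1 n) with hs
    have hx'eq : x' = fun n => xor (decide (n ∈ s)) (p.1 n) := by
      funext n
      by_cases hn : n ∈ s
      · have hne : x' n ≠ p.1 n := (Finset.mem_filter.1 hn).2
        simp only [hn, decide_eq_true_eq, decide_true]
        exact stmt5_bxor3 _ _ hne
      · have heq : x' n = p.1 n := by
          by_cases hN' : N ≤ n
          · exact hN n hN'
          · by_contra hne
            exact hn (Finset.mem_filter.2 ⟨Finset.mem_range.2 (by omega), hne⟩)
        simp [hn, heq]
    rw [hx'eq]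
    have heq2 : cadd (fun n => xor (decide (n ∈ s)) (p.1 n)) p.2
        = fun n => xor (decide (n ∈ s)) (xor (p.1 n) (p.2 n)) :=
      funext fun n => Bool.xor_assoc _ _ _
    rw [heq2]
    exact h s

lemma stmt5_section_eq (B : Set (ℕ → Bool)) (x : ℕ → Bool) :
    {y | (x, y) ∈ QB B} = ⋂ (s : Finset ℕ),
      (fun y : ℕ → Bool => fun n => xor (xor (decide (n ∈ s)) (x n)) (y n)) ⁻¹' B := by
  ext y
  rw [mem_setOf_eq, stmt5_QB_eq]
  simp only [mem_iInter, mem_preimage]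
  have heq : ∀ s : Finset ℕ, (fun n => xor (xor (decide (n ∈ s)) (x n)) (y n))
      = fun n => xor (decide (n ∈ s)) (xor (x n) (y n)) :=
    fun s => funext fun n => Bool.xor_assoc _ _ _
  constructor
  · intro h s
    rw [heq s]; exact h s
  · intro h s
    rw [← heq s]; exact h s

def stmt5_cylSet (s : Finset ℕ) (f : ℕ → Bool) : Set (ℕ → Bool) := {y | ∀ n ∈ s, y n = f n}

lemma stmt5_cyl_meas (s : Finset ℕ) (f : ℕ → Bool) : MeasurableSet (stmt5_cylSet s f) := by
  have h : stmt5_cylSet s f = ⋂ n ∈ (s : Set ℕ), (fun y : ℕ → Bool => y n) ⁻¹' {f n} := by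
    ext y; simp [stmt5_cylSet]
  rw [h]
  exact MeasurableSet.biInter s.countable_toSet fun n _ =>
    measurable_pi_apply n (measurableSet_singleton _)

lemma stmt5_gen_cyl : (inferInstance : MeasurableSpace (ℕ → Bool)) =
    generateFrom {S | ∃ (s : Finset ℕ) (f : ℕ → Bool), S = stmt5_cylSet s f} := by
  refine le_antisymm ?_ (generateFrom_le ?_)
  · refine iSup_le fun n => ?_
    refine Measurable.comap_le ?_
    refine @measurable_to_countable' Bool (ℕ → Bool) _ _
      (generateFrom {S | ∃ (s : Finset ℕ) (f : ℕ → Bool), S = stmt5_cylSet s f})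
      (fun y => y n) (fun b => ?_)
    have h : (fun y : ℕ → Bool => y n) ⁻¹' {b} = stmt5_cylSet {n} (fun _ => b) := by
      ext y; simp [stmt5_cylSet]
    rw [h]
    exact measurableSet_generateFrom ⟨{n}, fun _ => b, rfl⟩
  · rintro S ⟨s, f, rfl⟩; exact stmt5_cyl_meas s f

lemma stmt5_pi_cyl : IsPiSystem {S : Set (ℕ → Bool) | ∃ s f, S = stmt5_cylSet s f} := by
  rintro _ ⟨s, f, rfl⟩ _ ⟨t, g, rfl⟩ hne
  obtain ⟨z, hz1, hz2⟩ := hne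
  refine ⟨s ∪ t, z, ?_⟩
  ext y
  simp only [stmt5_cylSet, mem_inter_iff, mem_setOf_eq, Finset.mem_union]
  constructor
  · rintro ⟨h1, h2⟩ n hn
    rcases hn with h | h
    · rw [h1 n h]; exact (hz1 n h).symm
    · rw [h2 n h]; exact (hz2 n h).symm
  · intro h
    exact ⟨fun n hn => (h n (Or.inl hn)).trans (hz1 n hn),
      fun n hn => (h n (Or.inr hn)).trans (hz2 n hn)⟩

lemma stmt5_cadd_meas (c : ℕ → Bool) :
    Measurable fun x : ℕ → Bool => fun n => xor (x n) (c n) := by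
  refine measurable_pi_iff.2 fun n => ?_
  refine measurable_to_countable' fun b => ?_
  have h : (fun x : ℕ → Bool => xor (x n) (c n)) ⁻¹' {b}
      = (fun x : ℕ → Bool => x n) ⁻¹' {xor b (c n)} := by
    ext x
    simp only [mem_preimage, mem_singleton_iff]
    exact stmt5_bxor1 _ _ _
  rw [h]
  exact measurable_pi_apply n (measurableSet_singleton _)

lemma stmt5_map_cadd (μ : Measure (ℕ → Bool)) [IsProbabilityMeasure μ]
    (hμ : ∀ (s : Finset ℕ) (f : ℕ → Bool),
      μ {y | ∀ n ∈ s, y n = f n} = (2 : ENNReal)⁻¹ ^ s.card) (c : ℕ → Bool) :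
    μ.map (fun x => fun n => xor (x n) (c n)) = μ := by
  haveI : IsProbabilityMeasure (μ.map (fun x => fun n => xor (x n) (c n))) :=
    Measure.isProbabilityMeasure_map (stmt5_cadd_meas c).aemeasurable
  refine ext_of_generate_finite _ stmt5_gen_cyl stmt5_pi_cyl ?_ ?_
  · rintro S ⟨s, f, rfl⟩
    rw [Measure.map_apply (stmt5_cadd_meas c) (stmt5_cyl_meas s f)]
    have h : (fun x : ℕ → Bool => fun n => xor (x n) (c n)) ⁻¹' stmt5_cylSet s f
        = stmt5_cylSet s (fun n => xor (f n) (c n)) := by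
      ext x
      simp only [stmt5_cylSet, mem_preimage, mem_setOf_eq]
      exact forall₂_congr fun n _ => stmt5_bxor1 _ _ _
    rw [h]
    exact (hμ s _).trans (hμ s f).symm
  · simp

lemma stmt5_half_meas (μ : Measure (ℕ → Bool))
    (hμ : ∀ (s : Finset ℕ) (f : ℕ → Bool),
      μ {y | ∀ n ∈ s, y n = f n} = (2 : ENNReal)⁻¹ ^ s.card) (n : ℕ) (b : Bool) :
    μ {x : ℕ → Bool | x n = b} = 2⁻¹ := by
  have h := hμ {n} (fun _ => b)
  simpa using h

lemma stmt5_indep_coords (μ : Measure (ℕ → Bool)) [IsProbabilityMeasure μ]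
    (hμ : ∀ (s : Finset ℕ) (f : ℕ → Bool),
      μ {y | ∀ n ∈ s, y n = f n} = (2 : ENNReal)⁻¹ ^ s.card) :
    iIndep (fun n => MeasurableSpace.comap (fun x : ℕ → Bool => x n) inferInstance) μ := by
  classical
  refine iIndepSets.iIndep (fun n => (measurable_pi_apply n).comap_le)
    (fun n => {T | ∃ b, T = {x : ℕ → Bool | x n = b}}) ?_ ?_ ?_
  · rintro n _ ⟨a, rfl⟩ _ ⟨b, rfl⟩ hne
    obtain ⟨x, hx1, hx2⟩ := hne
    have hab : a = b := (hx1 : x n = a).symm.trans hx2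
    subst hab
    rw [Set.inter_self]
    exact ⟨a, rfl⟩
  · intro n
    refine le_antisymm ?_ (generateFrom_le ?_)
    · intro t ht
      obtain ⟨u, -, rfl⟩ := ht
      have h : (fun x : ℕ → Bool => x n) ⁻¹' u = ⋃ b ∈ u, {x : ℕ → Bool | x n = b} := by
        ext x
        simp only [mem_preimage, mem_iUnion, mem_setOf_eq]
        exact ⟨fun h => ⟨_, h, rfl⟩, fun ⟨b, hb, he⟩ => he ▸ hb⟩
      rw [h]
      exact MeasurableSet.biUnion u.to_countable fun b _ =>
        measurableSet_generateFrom ⟨b, rfl⟩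
    · rintro _ ⟨b, rfl⟩
      exact ⟨{b}, measurableSet_singleton b, by ext x; simp⟩
  · rw [iIndepSets_iff]
    intro t f H
    have H' : ∀ i : ℕ, ∃ b : Bool, i ∈ t → f i = {x : ℕ → Bool | x i = b} := by
      intro i
      by_cases h : i ∈ t
      · obtain ⟨b, hb⟩ := H i h; exact ⟨b, fun _ => hb⟩
      · exact ⟨true, fun h' => absurd h' h⟩
    choose b hb using H'
    have h1 : (⋂ i ∈ t, f i) = {y : ℕ → Bool | ∀ n ∈ t, y n = b n} := by
      ext y
      simp only [mem_iInter, mem_setOf_eq]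
      exact forall₂_congr fun i hi => by rw [hb i hi]; exact Iff.rfl
    rw [h1, hμ]
    rw [Finset.prod_congr rfl (fun i hi => by rw [hb i hi, stmt5_half_meas μ hμ])]
    rw [Finset.prod_const]

lemma stmt5_zero_one (μ : Measure (ℕ → Bool)) [IsProbabilityMeasure μ]
    (hμ : ∀ (s : Finset ℕ) (f : ℕ → Bool),
      μ {y | ∀ n ∈ s, y n = f n} = (2 : ENNReal)⁻¹ ^ s.card)
    (A : Set (ℕ → Bool)) (hA : MeasurableSet A)
    (hinv : ∀ x y, E0 x y → (x ∈ A ↔ y ∈ A)) :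
    μ A = 0 ∨ μ A = 1 := by
  refine measure_zero_or_one_of_measurableSet_limsup_atTop
    (fun n => (measurable_pi_apply n).comap_le) (stmt5_indep_coords μ hμ) ?_
  rw [Filter.limsup_eq_iInf_iSup_of_nat, measurableSet_iInf]
  intro n
  set m' := ⨆ i, ⨆ (_ : i ≥ n),
    MeasurableSpace.comap (fun x : ℕ → Bool => x i) inferInstance with hm'
  have hF : @Measurable (ℕ → Bool) (ℕ → Bool) m' MeasurableSpace.pi
      (fun x => fun k => if k < n then false else x k) := by
    refine measurable_pi_lambda _ fun k => ?_
    by_cases hk : k < n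
    · simp only [if_pos hk]; exact measurable_const
    · simp only [if_neg hk]
      exact Measurable.of_comap_le (le_iSup₂
        (f := fun i (_ : i ≥ n) =>
          MeasurableSpace.comap (fun x : ℕ → Bool => x i) inferInstance) k (not_lt.1 hk))
  have hAeq : A = (fun x : ℕ → Bool => fun k => if k < n then false else x k) ⁻¹' A := by
    ext x
    exact hinv x _ (Filter.eventually_atTop.2 ⟨n, fun k hk => (if_neg (not_lt.2 hk)).symm⟩)
  rw [hAeq]
  exact hF hA

end Auxiliary

/-- If `B` is `Gδ`, comeager and `μ`-null (where `μ` is the Haar = uniform product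
measure on the Cantor group), then `Q(x,y) ⟺ ∀ x' E₀ x, x' + y ∈ B` is `Gδ`, `E₀`-invariant in
the first coordinate, has comeager sections, and admits no Borel `E₀`-invariant
uniformization. -/
theorem stmt5 (μ : Measure (ℕ → Bool)) [IsProbabilityMeasure μ]
    (hμ : ∀ (s : Finset ℕ) (f : ℕ → Bool),
      μ {y | ∀ n ∈ s, y n = f n} = (2 : ENNReal)⁻¹ ^ s.card)
    (B : Set (ℕ → Bool)) (hBGdelta : IsGδ B)
    (hBcomeager : B ∈ residual (ℕ → Bool)) (hBnull : μ B = 0) :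
    IsGδ (QB B) ∧
    (∀ x x', E0 x x' → ∀ y, ((x, y) ∈ QB B ↔ (x', y) ∈ QB B)) ∧
    (∀ x, {y | (x, y) ∈ QB B} ∈ residual (ℕ → Bool)) ∧
    ¬ ∃ g : (ℕ → Bool) → (ℕ → Bool), Measurable g ∧ (∀ x, (x, g x) ∈ QB B) ∧
        ∀ x x', E0 x x' → g x = g x' := by
  classical
  refine ⟨?_, ?_, ?_, ?_⟩
  · -- Gδ
    rw [stmt5_QB_eq]
    exact IsGδ.iInter fun s =>
      stmt5_isGδ_preimage (stmt5_cont1 fun n => decide (n ∈ s)) hBGdelta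
  · -- E0-invariance
    intro x x' hxx' y
    have hsymm : E0 x' x := E0_symm hxx'
    constructor
    · intro h x'' h''
      exact h x'' (E0_trans h'' hsymm)
    · intro h x'' h''
      exact h x'' (E0_trans h'' hxx')
  · -- comeager sections
    intro x
    rw [stmt5_section_eq]
    refine (countable_iInter_mem).2 fun s => ?_
    set z : ℕ → Bool := fun n => xor (decide (n ∈ s)) (x n) with hz
    set τ : (ℕ → Bool) → (ℕ → Bool) := fun y => fun n => xor (z n) (y n) with hτ
    have hτcont : Continuous τ := stmt5_cont2 z
    have hopen : IsOpenMap τ := by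
      refine Homeomorph.isOpenMap
        ⟨⟨τ, τ, fun y => funext fun n => stmt5_bxor2 _ _,
          fun y => funext fun n => stmt5_bxor2 _ _⟩, hτcont, hτcont⟩
    obtain ⟨S, hSo, hSd, hSc, hSs⟩ := mem_residual_iff.1 hBcomeager
    refine mem_residual_iff.2 ⟨(τ ⁻¹' ·) '' S, ?_, ?_, hSc.image _, ?_⟩
    · rintro _ ⟨t, ht, rfl⟩
      exact (hSo t ht).preimage hτcont
    · rintro _ ⟨t, ht, rfl⟩
      exact (hSd t ht).preimage hopen
    · rw [sInter_image, ← preimage_sInter]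
      exact preimage_mono hSs
  · -- no invariant uniformization
    rintro ⟨g, hg, hQ, hinv⟩
    have hmeas : ∀ n b, MeasurableSet {x : ℕ → Bool | g x n = b} := fun n b =>
      ((measurable_pi_apply n).comp hg) (measurableSet_singleton b)
    have h01 : ∀ n b, μ {x : ℕ → Bool | g x n = b} = 0 ∨ μ {x : ℕ → Bool | g x n = b} = 1 :=
      fun n b => stmt5_zero_one μ hμ _ (hmeas n b)
        (fun x y h => by simp only [mem_setOf_eq, hinv x y h])
    set c : ℕ → Bool := fun n => if μ {x : ℕ → Bool | g x n = true} = 1 then true else false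
      with hc_def
    have hc : ∀ n, μ {x : ℕ → Bool | g x n = c n} = 1 := by
      intro n
      by_cases h : μ {x : ℕ → Bool | g x n = true} = 1
      · simp [hc_def, h]
      · have h0 : μ {x : ℕ → Bool | g x n = true} = 0 := (h01 n true).resolve_right h
        have hcompl : {x : ℕ → Bool | g x n = false} = {x : ℕ → Bool | g x n = true}ᶜ := by
          ext x; simp
        simp only [hc_def, if_neg h]
        rw [hcompl, prob_compl_eq_one_sub (hmeas n true), h0, tsub_zero]
    have hK : μ (⋂ n, {x : ℕ → Bool | g x n = c n}) = 1 := by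
      refine (prob_compl_eq_zero_iff (MeasurableSet.iInter fun n => hmeas n (c n))).1 ?_
      rw [compl_iInter]
      refine measure_iUnion_null fun n => ?_
      exact (prob_compl_eq_zero_iff (hmeas n (c n))).2 (hc n)
    have hsub : (⋂ n, {x : ℕ → Bool | g x n = c n})
        ⊆ (fun x : ℕ → Bool => fun n => xor (x n) (c n)) ⁻¹' B := by
      intro x hx
      have hgx : g x = c := funext fun n => by simpa using mem_iInter.1 hx n
      have hB : cadd x (g x) ∈ B := hQ x x (E0_refl x)
      rw [hgx] at hB
      exact hB
    have hnull : μ ((fun x : ℕ → Bool => fun n => xor (x n) (c n)) ⁻¹' B) = 0 := by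
      rw [← Measure.map_apply (stmt5_cadd_meas c) hBGdelta.measurableSet,
        stmt5_map_cadd μ hμ c]
      exact hBnull
    have hcontr : (1 : ENNReal) ≤ 0 := by
      calc (1 : ENNReal) = μ (⋂ n, {x : ℕ → Bool | g x n = c n}) := hK.symm
        _ ≤ μ ((fun x : ℕ → Bool => fun n => xor (x n) (c n)) ⁻¹' B) := measure_mono hsub
        _ = 0 := hnull
    simp at hcontr
end

section
/- There is a smooth countable Borel equivalence relation F on ℕ × ℕ^ℕ and an open set P ⊆ (ℕ × ℕ^ℕ) × 2^ℕ such that ⋂_{u ∈ C} P_u ≠ ∅ for every F-class C, but P admits no Borel F-invariant uniformization. Concretely: take a Gδ set R ⊆ ℕ^ℕ × 2^ℕ with full projection onto ℕ^ℕ admitting no Borel uniformization, write R = ⋂_n Q_n with Q_n open, set P(n, x, y) iff Q_n(x, y), and let (n, x) F (m, x') iff x = x'. -/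
open Set

noncomputable section
namespace Stmt8

/-! ### Finite prefixes -/

def xpre (x : ℕ → ℕ) (k : ℕ) : List ℕ := (List.range k).map x

@[simp] lemma xpre_length (x : ℕ → ℕ) (k : ℕ) : (xpre x k).length = k := by simp [xpre]

lemma xpre_succ (x : ℕ → ℕ) (k : ℕ) : xpre x (k+1) = xpre x k ++ [x k] := by
  simp [xpre, List.range_succ]

lemma xpre_prefix (x : ℕ → ℕ) {k n : ℕ} (h : k ≤ n) : xpre x k <+: xpre x n := by
  induction n with
  | zero => interval_cases k; exact List.prefix_refl _
  | succ n ih =>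
    rcases Nat.lt_or_ge k (n+1) with h' | h'
    · exact (ih (by omega)).trans (by rw [xpre_succ]; exact ⟨[x n], rfl⟩)
    · have : k = n + 1 := by omega
      subst this; exact List.prefix_refl _

lemma xpre_take (x : ℕ → ℕ) {k n : ℕ} (h : k ≤ n) : (xpre x n).take k = xpre x k := by
  obtain ⟨r, hr⟩ := xpre_prefix x h
  rw [← hr, List.take_append_of_le_length (by simp), List.take_of_length_le (by simp)]

lemma xpre_congr {x y : ℕ → ℕ} {k : ℕ} (h : ∀ i < k, x i = y i) : xpre x k = xpre y k := by
  induction k with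
  | zero => rfl
  | succ k ih =>
    rw [xpre_succ, xpre_succ, ih (fun i hi => h i (by omega)), h k (by omega)]

lemma xpre_getElem {x : ℕ → ℕ} {k i : ℕ} (h : i < k) :
    (xpre x k)[i]'(by simpa using h) = x i := by
  simp [xpre]

lemma xpre_inj {x y : ℕ → ℕ} {k : ℕ} (h : xpre x k = xpre y k) : ∀ i < k, x i = y i := by
  intro i hi
  calc x i = (xpre x k)[i]'(by simpa using hi) := (xpre_getElem hi).symm
    _ = (xpre y k)[i]'(by simpa using hi) := List.getElem_of_eq h _
    _ = y i := xpre_getElem hi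

/-! ### Strict prefix order -/

def sp (s t : List ℕ) : Prop := s <+: t ∧ s.length < t.length

lemma sp_trans {s t u : List ℕ} (h1 : sp s t) (h2 : sp t u) : sp s u :=
  ⟨h1.1.trans h2.1, h1.2.trans h2.2⟩

lemma xpre_sp (z : ℕ → ℕ) (n : ℕ) : sp (xpre z n) (xpre z (n+1)) :=
  ⟨by rw [xpre_succ]; exact ⟨[z n], rfl⟩, by simp⟩

/-! ### Trees, chains, branches -/

def eL : List ℕ × List ℕ → ℕ := Encodable.encode

lemma eL_inj : Function.Injective eL := Encodable.encode_injective

def Tr (a x : ℕ → ℕ) : Set (List ℕ) := {t | ∀ k ≤ t.length, a (eL (xpre x k, t.take k)) = 0}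

lemma Tr_pc {a x : ℕ → ℕ} {s t : List ℕ} (ht : t ∈ Tr a x) (hst : s <+: t) : s ∈ Tr a x := by
  intro k hk
  obtain ⟨r, hr⟩ := hst
  have : t.take k = s.take k := by
    rw [← hr, List.take_append_of_le_length hk]
  rw [← this]
  exact ht k (hk.trans (by rw [← hr]; simp))

def chain (T : Set (List ℕ)) : Prop := ∃ g : ℕ → List ℕ, ∀ n, g n ∈ T ∧ sp (g n) (g (n+1))

lemma chain_of_branch {T : Set (List ℕ)} {z : ℕ → ℕ} (h : ∀ n, xpre z n ∈ T) : chain T :=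
  ⟨fun n => xpre z n, fun n => ⟨h n, xpre_sp z n⟩⟩

lemma chain_mono {T : Set (List ℕ)} {g : ℕ → List ℕ} (hg : ∀ n, g n ∈ T ∧ sp (g n) (g (n+1)))
    {k n : ℕ} (h : k ≤ n) : g k <+: g n := by
  induction n with
  | zero => interval_cases k; exact List.prefix_refl _
  | succ n ih =>
    rcases Nat.lt_or_ge k (n+1) with h' | h'
    · exact (ih (by omega)).trans (hg n).2.1
    · have : k = n + 1 := by omega
      subst this; exact List.prefix_refl _

lemma chain_length {T : Set (List ℕ)} {g : ℕ → List ℕ} (hg : ∀ n, g n ∈ T ∧ sp (g n) (g (n+1)))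
    (n : ℕ) : n ≤ (g n).length := by
  induction n with
  | zero => omega
  | succ n ih => have := (hg n).2.2; omega

lemma branch_of_chain {T : Set (List ℕ)} (pc : ∀ {s t}, t ∈ T → s <+: t → s ∈ T)
    (h : chain T) : ∃ z, ∀ n, xpre z n ∈ T := by
  obtain ⟨g, hg⟩ := h
  refine ⟨fun m => (g (m+1)).getD m 0, fun n => ?_⟩
  have hlen : n ≤ (g n).length := chain_length hg n
  have hxp : xpre (fun m => (g (m+1)).getD m 0) n = (g n).take n := by
    apply List.ext_getElem (by simp [hlen])
    intro i h1 h2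
    rw [xpre_getElem (by simpa using h1), List.getElem_take]
    have hpre : g (i+1) <+: g n := chain_mono hg (by simpa using h1)
    have hi : i < (g (i+1)).length := by have := chain_length hg (i+1); omega
    rw [List.getD_eq_getElem _ _ hi]
    exact hpre.getElem hi
  rw [hxp]
  exact pc (hg n).1 (List.take_prefix _ _)

/-! ### Well-foundedness and rank -/

def tRel (T : Set (List ℕ)) (a b : List ℕ) : Prop := a ∈ T ∧ b ∈ T ∧ sp b a

lemma wf_of_not_chain {T : Set (List ℕ)} (h : ¬ chain T) : WellFounded (tRel T) := by
  by_contra hwf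
  haveI : IsStrictOrder (List ℕ) (tRel T) :=
    { irrefl := fun a ha => by have := ha.2.2.2; omega
      trans := fun a b c h1 h2 => ⟨h1.1, h2.2.1, sp_trans h2.2.2 h1.2.2⟩ }
  rw [RelEmbedding.wellFounded_iff_isEmpty, not_isEmpty_iff] at hwf
  obtain ⟨e⟩ := hwf
  refine h ⟨fun n => e n, fun n => ?_⟩
  have : tRel T (e (n+1)) (e n) := e.map_rel_iff.2 (by omega)
  exact ⟨this.2.1, this.2.2⟩

def rkf {T : Set (List ℕ)} (w : WellFounded (tRel T)) (t : List ℕ) : Ordinal :=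
  (w.apply t).rank

lemma rk_lt {T : Set (List ℕ)} (w : WellFounded (tRel T)) {s t : List ℕ}
    (h : tRel T s t) : rkf w s < rkf w t :=
  Acc.rank_lt_of_rel _ h

lemma rk_exists {T : Set (List ℕ)} (w : WellFounded (tRel T)) {t : List ℕ} {β : Ordinal}
    (h : β < rkf w t) : ∃ s, tRel T s t ∧ β ≤ rkf w s := by
  rw [rkf, Acc.rank_eq, Ordinal.lt_iSup_iff] at h
  obtain ⟨⟨s, hs⟩, h⟩ := h
  exact ⟨s, hs, Order.lt_succ_iff.1 h⟩

/-! ### Building monotone maps between well-founded trees -/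

lemma sp_concat (l : List ℕ) (a : ℕ) : sp l (l ++ [a]) := ⟨⟨[a], rfl⟩, by simp⟩

lemma build {S T : Set (List ℕ)} (pcS : ∀ {s t}, t ∈ S → s <+: t → s ∈ S)
    (wS : WellFounded (tRel S)) (wT : WellFounded (tRel T))
    {t₀ : List ℕ} (ht₀ : t₀ ∈ T) (hrk : rkf wS [] ≤ rkf wT t₀) :
    ∃ f : List ℕ → List ℕ, (∀ s ∈ S, f s ∈ T ∧ t₀ <+: f s) ∧
      (∀ s ∈ S, ∀ t ∈ S, sp s t → sp (f s) (f t)) := by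
  classical
  let f : List ℕ → List ℕ := fun s => s.reverseRecOn t₀ (fun l a fl =>
      if h : ∃ t', tRel T t' fl ∧ rkf wS (l ++ [a]) ≤ rkf wT t' then h.choose else [])
  have hnil : f [] = t₀ := List.reverseRecOn_nil ..
  have hstep : ∀ l a, f (l ++ [a]) =
      if h : ∃ t', tRel T t' (f l) ∧ rkf wS (l ++ [a]) ≤ rkf wT t' then h.choose else [] :=
    fun l a => List.reverseRecOn_concat ..
  have main : ∀ s, s ∈ S →
      (f s ∈ T ∧ t₀ <+: f s ∧ rkf wS s ≤ rkf wT (f s)) ∧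
      (∀ u ∈ S, sp u s → sp (f u) (f s)) := by
    intro s
    induction s using List.reverseRecOn with
    | nil =>
      intro _
      refine ⟨⟨hnil ▸ ht₀, by rw [hnil], hnil ▸ hrk⟩, ?_⟩
      rintro u _ ⟨_, hl⟩
      simp at hl
    | append_singleton l a IH =>
      intro hs
      have hl : l ∈ S := pcS hs ⟨[a], rfl⟩
      obtain ⟨⟨hfT, hfp, hfr⟩, hmono⟩ := IH hl
      have hlt : rkf wS (l ++ [a]) < rkf wS l := rk_lt wS ⟨hs, hl, sp_concat l a⟩
      have hex : ∃ t', tRel T t' (f l) ∧ rkf wS (l ++ [a]) ≤ rkf wT t' := by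
        obtain ⟨t', ht', hr⟩ := rk_exists wT (lt_of_lt_of_le hlt hfr)
        exact ⟨t', ht', hr⟩
      have hfs : f (l ++ [a]) = hex.choose := by rw [hstep]; exact dif_pos hex
      obtain ⟨⟨hmemT, _, hspc⟩, hrk'⟩ := hex.choose_spec
      have hstepsp : sp (f l) (f (l ++ [a])) := by rw [hfs]; exact hspc
      refine ⟨⟨by rw [hfs]; exact hmemT, hfp.trans hstepsp.1, by rw [hfs]; exact hrk'⟩, ?_⟩
      intro u hu hsp
      have hulen : u.length ≤ l.length := by have := hsp.2; simp at this; omega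
      have hupre : u <+: l := by
        have h1 : u = (l ++ [a]).take u.length := List.prefix_iff_eq_take.1 hsp.1
        rw [List.take_append_of_le_length hulen] at h1
        exact h1 ▸ List.take_prefix _ _
      rcases Nat.lt_or_ge u.length l.length with h' | h'
      · exact sp_trans (hmono u hu ⟨hupre, h'⟩) hstepsp
      · have : u = l := List.IsPrefix.eq_of_length hupre (by omega)
        subst this
        exact hstepsp
  exact ⟨f, fun s hs => ⟨((main s hs).1).1, ((main s hs).1).2.1⟩,
    fun s hs t ht hst => (main t ht).2 s hs hst⟩

/-! ### The two comparison relations -/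

def Mle (S T : Set (List ℕ)) : Prop :=
  ∃ f : List ℕ → List ℕ, (∀ s ∈ S, f s ∈ T) ∧
    (∀ s ∈ S, ∀ t ∈ S, sp s t → sp (f s) (f t))

def Prec (S T : Set (List ℕ)) : Prop :=
  ∃ f : List ℕ → List ℕ, (∀ s ∈ S, f s ∈ T ∧ f s ≠ []) ∧
    (∀ s ∈ S, ∀ t ∈ S, sp s t → sp (f s) (f t))

lemma chain_transport {S T : Set (List ℕ)} {f : List ℕ → List ℕ}
    (hmap : ∀ s ∈ S, f s ∈ T) (hmono : ∀ s ∈ S, ∀ t ∈ S, sp s t → sp (f s) (f t))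
    (h : chain S) : chain T := by
  obtain ⟨g, hg⟩ := h
  exact ⟨fun n => f (g n), fun n =>
    ⟨hmap _ (hg n).1, hmono _ (hg n).1 _ (hg (n+1)).1 (hg n).2⟩⟩

lemma chain_of_Mle {S T : Set (List ℕ)} (h : Mle S T) (hc : chain S) : chain T := by
  obtain ⟨f, hmap, hmono⟩ := h
  exact chain_transport hmap hmono hc

lemma chain_of_Prec {S T : Set (List ℕ)} (h : Prec S T) (hc : chain S) : chain T := by
  obtain ⟨f, hmap, hmono⟩ := h
  exact chain_transport (fun s hs => (hmap s hs).1) hmono hc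

lemma empty_of_nil_notMem {S : Set (List ℕ)} (pc : ∀ {s t}, t ∈ S → s <+: t → s ∈ S)
    (h : [] ∉ S) : ∀ s, s ∉ S := fun s hs => h (pc hs (List.nil_prefix))

/-- The covering dichotomy. -/
lemma cover {S T : Set (List ℕ)} (pcS : ∀ {s t}, t ∈ S → s <+: t → s ∈ S)
    (pcT : ∀ {s t}, t ∈ T → s <+: t → s ∈ T) :
    chain S ∨ chain T ∨ Mle S T ∨ Prec T S := by
  by_cases hS : chain S
  · exact Or.inl hS
  by_cases hT : chain T
  · exact Or.inr (Or.inl hT)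
  have wS := wf_of_not_chain hS
  have wT := wf_of_not_chain hT
  by_cases hSe : [] ∈ S
  · by_cases hTe : [] ∈ T
    · rcases le_or_gt (rkf wS []) (rkf wT []) with h | h
      · obtain ⟨f, hmap, hmono⟩ := build pcS wS wT hTe h
        exact Or.inr (Or.inr (Or.inl ⟨f, fun s hs => (hmap s hs).1, hmono⟩))
      · obtain ⟨t₀, hrel, hr⟩ := rk_exists wS h
        obtain ⟨f, hmap, hmono⟩ := build pcT wT wS hrel.1 hr
        refine Or.inr (Or.inr (Or.inr ⟨f, fun s hs => ⟨(hmap s hs).1, ?_⟩, hmono⟩))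
        have h1 : 0 < t₀.length := by have := hrel.2.2.2; simpa using this
        have h2 := (hmap s hs).2.length_le
        intro hnil
        rw [hnil] at h2
        simp at h2
        rw [h2] at h1
        simp at h1
    · refine Or.inr (Or.inr (Or.inr ⟨id, fun s hs => absurd hs (empty_of_nil_notMem pcT hTe s), ?_⟩))
      intro s hs
      exact absurd hs (empty_of_nil_notMem pcT hTe s)
  · refine Or.inr (Or.inr (Or.inl ⟨id, fun s hs => absurd hs (empty_of_nil_notMem pcS hSe s), ?_⟩))
    intro s hs
    exact absurd hs (empty_of_nil_notMem pcS hSe s)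

/-! ### Coding analytic (hence Borel) sets by trees -/

lemma tendsto_of_prefix {u : ℕ → (ℕ → ℕ)} {z : ℕ → ℕ}
    (h : ∀ n, ∀ i < n, u n i = z i) :
    Filter.Tendsto u Filter.atTop (nhds z) := by
  rw [tendsto_pi_nhds]
  intro i
  apply Filter.Tendsto.congr' (f₁ := fun _ => z i)
  · filter_upwards [Filter.eventually_ge_atTop (i+1)] with n hn
    exact (h n i (by omega)).symm
  · exact tendsto_const_nhds

lemma mem_Tr_iff {a x : ℕ → ℕ} {t : List ℕ} :
    t ∈ Tr a x ↔ ∀ k ≤ t.length, a (eL (xpre x k, t.take k)) = 0 := Iff.rfl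

lemma code_exists {B : Set (ℕ → ℕ)} (hB : MeasurableSet B) :
    ∃ a : ℕ → ℕ, ∀ x, chain (Tr a x) ↔ x ∈ B := by
  classical
  have hA := hB.analyticSet
  rw [MeasureTheory.AnalyticSet] at hA
  rcases hA with hempty | ⟨F, hFc, hFr⟩
  · refine ⟨fun _ => 1, fun x => ?_⟩
    rw [hempty]
    simp only [mem_empty_iff_false, iff_false]
    rintro ⟨g, hg⟩
    have := (hg 0).1 0 (by omega)
    simp at this
  · set a : ℕ → ℕ := fun m =>
      if ∃ (z : ℕ → ℕ) (k : ℕ), m = eL (xpre (F z) k, xpre z k) then 0 else 1 with ha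
    refine ⟨a, fun x => ?_⟩
    rw [← hFr]
    constructor
    · intro hc
      obtain ⟨z, hz⟩ := branch_of_chain (fun {s t} ht hst => Tr_pc ht hst) hc
      -- for each n, get a witness z' agreeing with z and F z' agreeing with x up to n
      have key : ∀ n, ∃ z' : ℕ → ℕ, (∀ i < n, z' i = z i) ∧ (∀ i < n, F z' i = x i) := by
        intro n
        have h1 := (hz n) n (by simp)
        rw [List.take_of_length_le (by simp)] at h1
        by_contra hcon
        push_neg at hcon
        have : ¬ ∃ (z' : ℕ → ℕ) (k : ℕ), eL (xpre x n, xpre z n) = eL (xpre (F z') k, xpre z' k) := by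
          rintro ⟨z', k, hk⟩
          have := eL_inj hk
          have hx1 : xpre x n = xpre (F z') k := congrArg Prod.fst this
          have hz1 : xpre z n = xpre z' k := congrArg Prod.snd this
          have hkn : k = n := by
            have := congrArg List.length hz1
            simpa using this.symm
          subst hkn
          obtain ⟨i, hi, hne⟩ := hcon z' (fun i hi => (xpre_inj hz1 i hi).symm)
          exact hne ((xpre_inj hx1 i hi).symm)
        rw [ha] at h1
        simp only [if_neg this] at h1
        exact one_ne_zero h1
      choose zs hz1 hz2 using key
      have t1 : Filter.Tendsto zs Filter.atTop (nhds z) := tendsto_of_prefix hz1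
      have t2 : Filter.Tendsto (fun n => F (zs n)) Filter.atTop (nhds x) :=
        tendsto_of_prefix hz2
      have t3 : Filter.Tendsto (fun n => F (zs n)) Filter.atTop (nhds (F z)) :=
        (hFc.tendsto z).comp t1
      exact ⟨z, tendsto_nhds_unique t3 t2⟩
    · rintro ⟨z, rfl⟩
      apply chain_of_branch (z := z)
      intro n k hk
      simp only [xpre_length] at hk
      rw [xpre_take z hk]
      simp only [ha]
      rw [if_pos ⟨z, k, rfl⟩]

/-! ### Diagonal machinery: interleaving and fixed points -/

def part (i : ℕ) (x : ℕ → ℕ) : ℕ → ℕ := fun k => x (3 * k + i)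

lemma part_continuous (i : ℕ) : Continuous (part i) := by
  apply continuous_pi
  intro k
  exact continuous_apply _

lemma part_measurable (i : ℕ) : Measurable (part i) := (part_continuous i).measurable

def fixSeq (a₀ a₁ : ℕ → ℕ) : ℕ → ℕ
  | n =>
    if n % 3 = 0 then a₀ (n / 3)
    else if n % 3 = 1 then a₁ (n / 3)
    else fixSeq a₀ a₁ (n / 3)
  decreasing_by
    have : n ≠ 0 := by omega
    exact Nat.div_lt_self (by omega) (by omega)

lemma part0_fixSeq (a₀ a₁ : ℕ → ℕ) : part 0 (fixSeq a₀ a₁) = a₀ := by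
  funext k
  rw [part, fixSeq]
  simp [Nat.mul_mod_right, Nat.mul_div_cancel_left]

lemma part1_fixSeq (a₀ a₁ : ℕ → ℕ) : part 1 (fixSeq a₀ a₁) = a₁ := by
  funext k
  rw [part, fixSeq]
  have h0 : (3 * k + 1) % 3 = 1 := by omega
  have h1 : (3 * k + 1) / 3 = k := by omega
  simp [h0, h1]

lemma part2_fixSeq (a₀ a₁ : ℕ → ℕ) : part 2 (fixSeq a₀ a₁) = fixSeq a₀ a₁ := by
  funext n
  rw [part, fixSeq]
  have h0 : (3 * n + 2) % 3 = 2 := by omega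
  have h1 : (3 * n + 2) / 3 = n := by omega
  simp [h0, h1]

/-! ### The inseparable pair -/

def T₀ (x : ℕ → ℕ) : Set (List ℕ) := Tr (part 0 x) x
def T₁ (x : ℕ → ℕ) : Set (List ℕ) := Tr (part 1 x) x

def A₀ : Set (ℕ → ℕ) := {x | chain (T₀ x) ∨ Prec (T₁ x) (T₀ x)}
def A₁ : Set (ℕ → ℕ) := {x | chain (T₁ x) ∨ Mle (T₀ x) (T₁ x)}

lemma cover_x (x : ℕ → ℕ) : x ∈ A₀ ∨ x ∈ A₁ := by
  rcases cover (S := T₀ x) (T := T₁ x)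
      (fun {s t} ht hst => Tr_pc ht hst) (fun {s t} ht hst => Tr_pc ht hst) with h | h | h | h
  · exact Or.inl (Or.inl h)
  · exact Or.inr (Or.inl h)
  · exact Or.inr (Or.inr h)
  · exact Or.inl (Or.inr h)

lemma insep {B : Set (ℕ → ℕ)} (hB : MeasurableSet B) (h1 : B ⊆ A₁) (h0 : Bᶜ ⊆ A₀) : False := by
  have m0 : MeasurableSet {x : ℕ → ℕ | part 2 x ∈ B} := (part_measurable 2) hB
  have m1 : MeasurableSet {x : ℕ → ℕ | part 2 x ∈ Bᶜ} := (part_measurable 2) hB.compl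
  obtain ⟨a₀, ha₀⟩ := code_exists m0
  obtain ⟨a₁, ha₁⟩ := code_exists m1
  set x := fixSeq a₀ a₁ with hx
  have e0 : chain (T₀ x) ↔ x ∈ B := by
    have h := ha₀ x
    rw [mem_setOf_eq, hx, part2_fixSeq, ← hx] at h
    rw [T₀, hx, part0_fixSeq, ← hx]
    exact h
  have e1 : chain (T₁ x) ↔ x ∉ B := by
    have h := ha₁ x
    rw [mem_setOf_eq, hx, part2_fixSeq, ← hx, mem_compl_iff] at h
    rw [T₁, hx, part1_fixSeq, ← hx]
    exact h
  by_cases hxB : x ∈ B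
  · rcases h1 hxB with hc | hm
    · exact (e1.1 hc) hxB
    · exact (e1.1 (chain_of_Mle hm (e0.2 hxB))) hxB
  · rcases h0 hxB with hc | hm
    · exact hxB (e0.1 hc)
    · exact hxB (e0.1 (chain_of_Prec hm (e1.2 hxB)))

/-! ### Witness conditions -/

def dL : ℕ → List ℕ := Denumerable.ofNat (List ℕ)
def eN : List ℕ → ℕ := Encodable.encode

lemma dL_eN (t : List ℕ) : dL (eN t) = t := Denumerable.ofNat_encode t

def shift2 (w : ℕ → ℕ) : ℕ → ℕ := fun n => w (n + 2)

def mapF (w : ℕ → ℕ) : List ℕ → List ℕ := fun t => dL (w (eN t + 2))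

def condW (x w : ℕ → ℕ) : Prop :=
  w 0 ≤ 1 ∧ w 1 ≤ 1 ∧
  (w 0 = 0 → w 1 = 0 → ∀ n, xpre (shift2 w) n ∈ T₀ x) ∧
  (w 0 = 0 → w 1 = 1 →
    (∀ t ∈ T₁ x, mapF w t ∈ T₀ x ∧ mapF w t ≠ []) ∧
    (∀ s ∈ T₁ x, ∀ t ∈ T₁ x, sp s t → sp (mapF w s) (mapF w t))) ∧
  (w 0 = 1 → w 1 = 0 → ∀ n, xpre (shift2 w) n ∈ T₁ x) ∧
  (w 0 = 1 → w 1 = 1 →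
    (∀ t ∈ T₀ x, mapF w t ∈ T₁ x) ∧
    (∀ s ∈ T₀ x, ∀ t ∈ T₀ x, sp s t → sp (mapF w s) (mapF w t)))

lemma condW_exists (x : ℕ → ℕ) : ∃ w, condW x w := by
  classical
  rcases cover_x x with h | h
  · rcases h with hc | hm
    · obtain ⟨z, hz⟩ := branch_of_chain (fun {s t} ht hst => Tr_pc ht hst) hc
      refine ⟨fun n => if n = 0 then 0 else if n = 1 then 0 else z (n - 2), ?_⟩
      have hsh : shift2 (fun n => if n = 0 then 0 else if n = 1 then 0 else z (n - 2)) = z := by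
        funext n; simp [shift2]
      refine ⟨by simp, by simp, ?_, ?_, ?_, ?_⟩ <;> intro h1 h2
      · rw [hsh]; exact hz
      · simp at h2
      · simp at h1
      · simp at h1
    · obtain ⟨f, hmap, hmono⟩ := hm
      refine ⟨fun n => if n = 0 then 0 else if n = 1 then 1 else eN (f (dL (n - 2))), ?_⟩
      have hmf : mapF (fun n => if n = 0 then 0 else if n = 1 then 1 else eN (f (dL (n - 2)))) = f := by
        funext t
        simp only [mapF]
        have h1 : eN t + 2 ≠ 0 := by omega
        have h2 : eN t + 2 ≠ 1 := by omega
        simp only [h1, h2, if_false]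
        rw [show eN t + 2 - 2 = eN t by omega, dL_eN, dL_eN]
      refine ⟨by simp, by simp, ?_, ?_, ?_, ?_⟩ <;> intro h1 h2
      · simp at h2
      · rw [hmf]; exact ⟨hmap, hmono⟩
      · simp at h1
      · simp at h1
  · rcases h with hc | hm
    · obtain ⟨z, hz⟩ := branch_of_chain (fun {s t} ht hst => Tr_pc ht hst) hc
      refine ⟨fun n => if n = 0 then 1 else if n = 1 then 0 else z (n - 2), ?_⟩
      have hsh : shift2 (fun n => if n = 0 then 1 else if n = 1 then 0 else z (n - 2)) = z := by
        funext n; simp [shift2]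
      refine ⟨by simp, by simp, ?_, ?_, ?_, ?_⟩ <;> intro h1 h2
      · simp at h1
      · simp at h1
      · rw [hsh]; exact hz
      · simp at h2
    · obtain ⟨f, hmap, hmono⟩ := hm
      refine ⟨fun n => if n = 0 then 1 else if n = 1 then 1 else eN (f (dL (n - 2))), ?_⟩
      have hmf : mapF (fun n => if n = 0 then 1 else if n = 1 then 1 else eN (f (dL (n - 2)))) = f := by
        funext t
        simp only [mapF]
        have h1 : eN t + 2 ≠ 0 := by omega
        have h2 : eN t + 2 ≠ 1 := by omega
        simp only [h1, h2, if_false]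
        rw [show eN t + 2 - 2 = eN t by omega, dL_eN, dL_eN]
      refine ⟨by simp, by simp, ?_, ?_, ?_, ?_⟩ <;> intro h1 h2
      · simp at h1
      · simp at h1
      · simp at h2
      · rw [hmf]; exact ⟨hmap, hmono⟩

lemma condW_A₀ {x w : ℕ → ℕ} (h : condW x w) (h0 : w 0 = 0) : x ∈ A₀ := by
  obtain ⟨hb0, hb1, hbr0, hmp0, _, _⟩ := h
  have : w 1 = 0 ∨ w 1 = 1 := by omega
  rcases this with h1 | h1
  · exact Or.inl (chain_of_branch (hbr0 h0 h1))
  · obtain ⟨hmap, hmono⟩ := hmp0 h0 h1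
    exact Or.inr ⟨mapF w, hmap, hmono⟩

lemma condW_A₁ {x w : ℕ → ℕ} (h : condW x w) (h0 : w 0 = 1) : x ∈ A₁ := by
  obtain ⟨hb0, hb1, _, _, hbr1, hmp1⟩ := h
  have : w 1 = 0 ∨ w 1 = 1 := by omega
  rcases this with h1 | h1
  · exact Or.inl (chain_of_branch (hbr1 h0 h1))
  · obtain ⟨hmap, hmono⟩ := hmp1 h0 h1
    exact Or.inr ⟨mapF w, hmap, hmono⟩

/-! ### Encoding witnesses into Cantor space -/

abbrev Pt := (ℕ → ℕ) × (ℕ → Bool)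

def pr (c m : ℕ) : ℕ := Nat.pair c m

def embG (w : ℕ → ℕ) : ℕ → Bool := fun j => decide (w (Nat.unpair j).1 = (Nat.unpair j).2)

lemma embG_pair {w : ℕ → ℕ} {c m : ℕ} : embG w (pr c m) = true ↔ w c = m := by
  simp [embG, pr]

lemma embG_surj {y : ℕ → Bool} (h1 : ∀ c, ∃ m, y (pr c m) = true)
    (h2 : ∀ c m m', y (pr c m) = true → y (pr c m') = true → m = m') :
    ∃ w, embG w = y := by
  choose w hw using h1
  refine ⟨w, funext fun j => ?_⟩
  have hj : pr (Nat.unpair j).1 (Nat.unpair j).2 = j := Nat.pair_unpair j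
  by_cases hy : y j = true
  · have hwc : w (Nat.unpair j).1 = (Nat.unpair j).2 :=
      h2 _ _ _ (hw _) (by rw [hj]; exact hy)
    simp [embG, hwc, hy]
  · have hne : w (Nat.unpair j).1 ≠ (Nat.unpair j).2 := by
      intro he
      apply hy
      rw [← hj, ← he]
      exact hw _
    have hyf : y j = false := (Bool.not_eq_true _) ▸ hy
    simp [embG, hne, hyf]

def bi (b : Bool) : ℕ := cond b 1 0
def Sidx (b : Bool) : ℕ := cond b 0 1

abbrev AIdx := ℕ ⊕ (ℕ × ℕ × ℕ) ⊕ (ℕ × ℕ) ⊕ (Bool × List ℕ) ⊕ (Bool × List ℕ × ℕ) ⊕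
  (Bool × List ℕ × List ℕ × ℕ × ℕ)

def O : AIdx → Set Pt
  | Sum.inl c => {p | ∃ m, p.2 (pr c m) = true}
  | Sum.inr (Sum.inl (c, m, m')) => {p | p.2 (pr c m) = true → p.2 (pr c m') = true → m = m'}
  | Sum.inr (Sum.inr (Sum.inl (c, m))) => {p | c ≤ 1 → p.2 (pr c m) = true → m ≤ 1}
  | Sum.inr (Sum.inr (Sum.inr (Sum.inl (b, l)))) =>
      {p | p.2 (pr 0 (bi b)) = true → p.2 (pr 1 0) = true →
        (∀ q < l.length, p.2 (pr (q + 2) (l.getD q 0)) = true) →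
        part (bi b) p.1 (eL (xpre p.1 l.length, l)) = 0}
  | Sum.inr (Sum.inr (Sum.inr (Sum.inr (Sum.inl (b, t, n))))) =>
      {p | p.2 (pr 0 (bi b)) = true → p.2 (pr 1 1) = true → p.2 (pr (eN t + 2) n) = true →
        t ∈ Tr (part (Sidx b) p.1) p.1 →
        (dL n ∈ Tr (part (bi b) p.1) p.1 ∧ (b = false → dL n ≠ []))}
  | Sum.inr (Sum.inr (Sum.inr (Sum.inr (Sum.inr (b, s, t, n, n'))))) =>
      {p | p.2 (pr 0 (bi b)) = true → p.2 (pr 1 1) = true →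
        p.2 (pr (eN s + 2) n) = true → p.2 (pr (eN t + 2) n') = true →
        s ∈ Tr (part (Sidx b) p.1) p.1 → t ∈ Tr (part (Sidx b) p.1) p.1 →
        sp s t → sp (dL n) (dL n')}

/-! ### Openness of the pieces -/

lemma isOpen_cyl {A : Set Pt}
    (h : ∀ p ∈ A, ∃ k, ∀ q : Pt, (∀ i < k, q.1 i = p.1 i) → (∀ i < k, q.2 i = p.2 i) → q ∈ A) :
    IsOpen A := by
  rw [isOpen_iff_mem_nhds]
  intro p hp
  obtain ⟨k, hk⟩ := h p hp
  have h1 : IsOpen (⋂ i : Fin k, ((fun q : Pt => q.1 i) ⁻¹' {p.1 i})) := by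
    apply isOpen_iInter_of_finite
    intro i
    exact (isOpen_discrete _).preimage ((continuous_apply (i : ℕ)).comp continuous_fst)
  have h2 : IsOpen (⋂ i : Fin k, ((fun q : Pt => q.2 i) ⁻¹' {p.2 i})) := by
    apply isOpen_iInter_of_finite
    intro i
    exact (isOpen_discrete _).preimage ((continuous_apply (i : ℕ)).comp continuous_snd)
  refine mem_nhds_iff.2 ⟨_, ?_, h1.inter h2, ?_⟩
  · rintro q ⟨hq1, hq2⟩
    refine hk q (fun i hi => ?_) (fun i hi => ?_)
    · exact mem_iInter.1 hq1 ⟨i, hi⟩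
    · exact mem_iInter.1 hq2 ⟨i, hi⟩
  · constructor <;> · rw [mem_iInter]; intro i; rfl

def trB (x : ℕ → ℕ) (j : ℕ) (t : List ℕ) : ℕ :=
  t.length + 1 + (Finset.range (t.length + 1)).sum (fun k => 3 * eL (xpre x k, t.take k) + j + 1)

lemma trB_len {x : ℕ → ℕ} {j : ℕ} {t : List ℕ} : t.length < trB x j t := by
  unfold trB; omega

lemma trB_pos {x : ℕ → ℕ} {j : ℕ} {t : List ℕ} :
    ∀ k ≤ t.length, 3 * eL (xpre x k, t.take k) + j < trB x j t := by
  intro k hk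
  have h1 : 3 * eL (xpre x k, t.take k) + j + 1 ≤
      (Finset.range (t.length + 1)).sum (fun k => 3 * eL (xpre x k, t.take k) + j + 1) :=
    Finset.single_le_sum (f := fun k => 3 * eL (xpre x k, t.take k) + j + 1)
      (fun _ _ => Nat.zero_le _) (Finset.mem_range.2 (by omega))
  unfold trB; omega

lemma Tr_iff_of_agree {x x' : ℕ → ℕ} {j : ℕ} {t : List ℕ} {K : ℕ}
    (hK : trB x j t ≤ K) (h : ∀ i < K, x' i = x i) :
    (t ∈ Tr (part j x') x' ↔ t ∈ Tr (part j x) x) := by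
  have key : ∀ k ≤ t.length,
      part j x' (eL (xpre x' k, t.take k)) = part j x (eL (xpre x k, t.take k)) := by
    intro k hk
    have hxp : xpre x' k = xpre x k :=
      xpre_congr (fun i hi => h i (by have := trB_len (x := x) (j := j) (t := t); omega))
    rw [hxp]
    show x' (3 * eL (xpre x k, t.take k) + j) = x (3 * eL (xpre x k, t.take k) + j)
    exact h _ (by have := trB_pos (x := x) (j := j) (t := t) k hk; omega)
  constructor <;> intro hm k hk
  · rw [← key k hk]; exact hm k hk
  · rw [key k hk]; exact hm k hk

lemma O_isOpen (i : AIdx) : IsOpen (O i) := by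
  match i with
  | Sum.inl c =>
    have : O (Sum.inl c) = ⋃ m, ((fun p : Pt => p.2 (pr c m)) ⁻¹' {true}) := by
      ext p; simp [O]
    rw [this]
    exact isOpen_iUnion fun m =>
      (isOpen_discrete _).preimage ((continuous_apply (pr c m)).comp continuous_snd)
  | Sum.inr (Sum.inl (c, m, m')) =>
    apply isOpen_cyl
    intro p hp
    refine ⟨pr c m + pr c m' + 1, fun q hq1 hq2 => ?_⟩
    intro e1 e2
    exact hp ((hq2 _ (by omega)).symm.trans e1) ((hq2 _ (by omega)).symm.trans e2)
  | Sum.inr (Sum.inr (Sum.inl (c, m))) =>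
    apply isOpen_cyl
    intro p hp
    refine ⟨pr c m + 1, fun q hq1 hq2 => ?_⟩
    intro hc e
    exact hp hc ((hq2 _ (by omega)).symm.trans e)
  | Sum.inr (Sum.inr (Sum.inr (Sum.inl (b, l)))) =>
    apply isOpen_cyl
    intro p hp
    set K := pr 0 (bi b) + pr 1 0 + l.length + 1 +
      (Finset.range l.length).sum (fun q => pr (q + 2) (l.getD q 0) + 1) +
      (3 * eL (xpre p.1 l.length, l) + bi b + 1) with hK
    refine ⟨K, fun q hq1 hq2 => ?_⟩
    intro e1 e2 e3
    have hxp : xpre q.1 l.length = xpre p.1 l.length :=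
      xpre_congr (fun i hi => hq1 i (by omega))
    have hcon : part (bi b) p.1 (eL (xpre p.1 l.length, l)) = 0 := by
      refine hp ((hq2 _ (by omega)).symm.trans e1) ((hq2 _ (by omega)).symm.trans e2) ?_
      intro j hj
      have hsum : pr (j + 2) (l.getD j 0) + 1 ≤
          (Finset.range l.length).sum (fun q => pr (q + 2) (l.getD q 0) + 1) :=
        Finset.single_le_sum (f := fun q => pr (q + 2) (l.getD q 0) + 1)
          (fun _ _ => Nat.zero_le _) (Finset.mem_range.2 hj)
      exact ((hq2 _ (by omega)).symm.trans (e3 j hj))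
    rw [show part (bi b) q.1 (eL (xpre q.1 l.length, l)) =
        q.1 (3 * eL (xpre q.1 l.length, l) + bi b) from rfl, hxp]
    rw [hq1 _ (by omega)]
    exact hcon
  | Sum.inr (Sum.inr (Sum.inr (Sum.inr (Sum.inl (b, t, n))))) =>
    apply isOpen_cyl
    intro p hp
    set K := pr 0 (bi b) + pr 1 1 + pr (eN t + 2) n + 1 +
      trB p.1 (Sidx b) t + trB p.1 (bi b) (dL n) with hK
    refine ⟨K, fun q hq1 hq2 => ?_⟩
    intro e1 e2 e3 e4
    have hsrc : (t ∈ Tr (part (Sidx b) q.1) q.1 ↔ t ∈ Tr (part (Sidx b) p.1) p.1) :=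
      Tr_iff_of_agree (by omega) (fun i hi => hq1 i hi)
    have htgt : (dL n ∈ Tr (part (bi b) q.1) q.1 ↔ dL n ∈ Tr (part (bi b) p.1) p.1) :=
      Tr_iff_of_agree (by omega) (fun i hi => hq1 i hi)
    have := hp ((hq2 _ (by omega)).symm.trans e1) ((hq2 _ (by omega)).symm.trans e2)
      ((hq2 _ (by omega)).symm.trans e3) (hsrc.1 e4)
    exact ⟨htgt.2 this.1, this.2⟩
  | Sum.inr (Sum.inr (Sum.inr (Sum.inr (Sum.inr (b, s, t, n, n'))))) =>
    apply isOpen_cyl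
    intro p hp
    set K := pr 0 (bi b) + pr 1 1 + pr (eN s + 2) n + pr (eN t + 2) n' + 1 +
      trB p.1 (Sidx b) s + trB p.1 (Sidx b) t with hK
    refine ⟨K, fun q hq1 hq2 => ?_⟩
    intro e1 e2 e3 e4 e5 e6 e7
    have hs : (s ∈ Tr (part (Sidx b) q.1) q.1 ↔ s ∈ Tr (part (Sidx b) p.1) p.1) :=
      Tr_iff_of_agree (by omega) (fun i hi => hq1 i hi)
    have ht : (t ∈ Tr (part (Sidx b) q.1) q.1 ↔ t ∈ Tr (part (Sidx b) p.1) p.1) :=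
      Tr_iff_of_agree (by omega) (fun i hi => hq1 i hi)
    exact hp ((hq2 _ (by omega)).symm.trans e1) ((hq2 _ (by omega)).symm.trans e2)
      ((hq2 _ (by omega)).symm.trans e3) ((hq2 _ (by omega)).symm.trans e4)
      (hs.1 e5) (ht.1 e6) e7

/-! ### Semantics of the open conditions -/

lemma xpre_getD {f : ℕ → ℕ} {k q : ℕ} (h : q < k) : (xpre f k).getD q 0 = f q := by
  rw [List.getD_eq_getElem _ _ (by simpa using h)]
  exact xpre_getElem h

lemma mem_O_embG (x w : ℕ → ℕ) : (∀ i : AIdx, ((x, embG w) : Pt) ∈ O i) ↔ condW x w := by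
  constructor
  · intro h
    have hb0 : w 0 ≤ 1 :=
      h (Sum.inr (Sum.inr (Sum.inl (0, w 0)))) (by omega) (embG_pair.2 rfl)
    have hb1 : w 1 ≤ 1 :=
      h (Sum.inr (Sum.inr (Sum.inl (1, w 1)))) (by omega) (embG_pair.2 rfl)
    have hbr : ∀ b : Bool, w 0 = bi b → w 1 = 0 →
        ∀ n, xpre (shift2 w) n ∈ Tr (part (bi b) x) x := by
      intro b h0 h1 n k hk
      simp only [xpre_length] at hk
      rw [xpre_take _ hk]
      have := h (Sum.inr (Sum.inr (Sum.inr (Sum.inl (b, xpre (shift2 w) k)))))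
        (embG_pair.2 h0) (embG_pair.2 h1) ?_
      · simpa using this
      · intro q hq
        simp only [xpre_length] at hq
        refine embG_pair.2 ?_
        rw [xpre_getD hq]
        rfl
    have hmp : ∀ b : Bool, w 0 = bi b → w 1 = 1 →
        (∀ t ∈ Tr (part (Sidx b) x) x,
          mapF w t ∈ Tr (part (bi b) x) x ∧ (b = false → mapF w t ≠ [])) ∧
        (∀ s ∈ Tr (part (Sidx b) x) x, ∀ t ∈ Tr (part (Sidx b) x) x,
          sp s t → sp (mapF w s) (mapF w t)) := by
      intro b h0 h1
      constructor
      · intro t ht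
        exact h (Sum.inr (Sum.inr (Sum.inr (Sum.inr (Sum.inl (b, t, w (eN t + 2)))))))
          (embG_pair.2 h0) (embG_pair.2 h1) (embG_pair.2 rfl) ht
      · intro u hu t ht hsp
        exact h (Sum.inr (Sum.inr (Sum.inr (Sum.inr (Sum.inr (b, u, t, w (eN u + 2), w (eN t + 2)))))))
          (embG_pair.2 h0) (embG_pair.2 h1) (embG_pair.2 rfl) (embG_pair.2 rfl) hu ht hsp
    refine ⟨hb0, hb1, ?_, ?_, ?_, ?_⟩
    · intro h0 h1
      exact hbr false h0 h1
    · intro h0 h1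
      obtain ⟨hmap, hmono⟩ := hmp false h0 h1
      exact ⟨fun t ht => ⟨(hmap t ht).1, (hmap t ht).2 rfl⟩, hmono⟩
    · intro h0 h1
      exact hbr true h0 h1
    · intro h0 h1
      obtain ⟨hmap, hmono⟩ := hmp true h0 h1
      exact ⟨fun t ht => (hmap t ht).1, hmono⟩
  · intro hc i
    match i with
    | Sum.inl c => exact ⟨w c, embG_pair.2 rfl⟩
    | Sum.inr (Sum.inl (c, m, m')) =>
      intro e1 e2
      exact (embG_pair.1 e1).symm.trans (embG_pair.1 e2)
    | Sum.inr (Sum.inr (Sum.inl (c, m))) =>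
      intro hc1 e
      have hm : w c = m := embG_pair.1 e
      have : c = 0 ∨ c = 1 := by omega
      rcases this with rfl | rfl
      · rw [← hm]; exact hc.1
      · rw [← hm]; exact hc.2.1
    | Sum.inr (Sum.inr (Sum.inr (Sum.inl (b, l)))) =>
      intro e1 e2 e3
      have h0 : w 0 = bi b := embG_pair.1 e1
      have h1 : w 1 = 0 := embG_pair.1 e2
      have hl : l = xpre (shift2 w) l.length := by
        apply List.ext_getElem (by simp)
        intro q hq1 hq2
        rw [xpre_getElem (by simpa using hq1)]
        have := embG_pair.1 (e3 q hq1)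
        rw [List.getD_eq_getElem _ _ hq1] at this
        exact this.symm
      have hmem : xpre (shift2 w) l.length ∈ Tr (part (bi b) x) x := by
        cases b
        · exact hc.2.2.1 h0 h1 l.length
        · exact hc.2.2.2.2.1 h0 h1 l.length
      have := hmem l.length (by simp)
      rw [List.take_of_length_le (by simp)] at this
      rw [hl]
      simpa using this
    | Sum.inr (Sum.inr (Sum.inr (Sum.inr (Sum.inl (b, t, n))))) =>
      intro e1 e2 e3 hsrc
      have h0 : w 0 = bi b := embG_pair.1 e1
      have h1 : w 1 = 1 := embG_pair.1 e2
      have hn : dL n = mapF w t := by rw [mapF, embG_pair.1 e3]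
      cases b
      · obtain ⟨hmap, _⟩ := hc.2.2.2.1 h0 h1
        obtain ⟨hm1, hm2⟩ := hmap t hsrc
        exact ⟨hn ▸ hm1, fun _ => hn ▸ hm2⟩
      · obtain ⟨hmap, _⟩ := hc.2.2.2.2.2 h0 h1
        exact ⟨hn ▸ hmap t hsrc, fun hb => by simp at hb⟩
    | Sum.inr (Sum.inr (Sum.inr (Sum.inr (Sum.inr (b, u, t, n, n'))))) =>
      intro e1 e2 e3 e4 hu ht hsp
      have h0 : w 0 = bi b := embG_pair.1 e1
      have h1 : w 1 = 1 := embG_pair.1 e2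
      have hn : dL n = mapF w u := by rw [mapF, embG_pair.1 e3]
      have hn' : dL n' = mapF w t := by rw [mapF, embG_pair.1 e4]
      rw [hn, hn']
      cases b
      · exact (hc.2.2.2.1 h0 h1).2 u hu t ht hsp
      · exact (hc.2.2.2.2.2 h0 h1).2 u hu t ht hsp

lemma RR_elim {x : ℕ → ℕ} {y : ℕ → Bool} (h : ∀ i : AIdx, ((x, y) : Pt) ∈ O i) :
    ∃ w, y = embG w ∧ condW x w := by
  obtain ⟨w, hw⟩ := embG_surj (fun c => h (Sum.inl c))
    (fun c m m' => h (Sum.inr (Sum.inl (c, m, m'))))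
  refine ⟨w, hw.symm, (mem_O_embG x w).1 ?_⟩
  rw [hw]
  exact h

/-! ### Enumerating the open sets -/

def Qn (n : ℕ) : Set Pt :=
  match (Encodable.decode n : Option AIdx) with
  | some i => O i
  | none => univ

lemma Qn_isOpen (n : ℕ) : IsOpen (Qn n) := by
  unfold Qn
  split
  · exact O_isOpen _
  · exact isOpen_univ

lemma mem_Qn_iff {p : Pt} : (∀ n, p ∈ Qn n) ↔ ∀ i : AIdx, p ∈ O i := by
  constructor
  · intro h i
    have := h (Encodable.encode i)
    unfold Qn at this
    rw [Encodable.encodek] at this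
    exact this
  · intro h n
    unfold Qn
    split
    · exact h _
    · trivial

end Stmt8

/-- The equivalence relation `F` on `ℕ × ℕ^ℕ` : `(n, x) F (m, x') ⟺ x = x'`. -/
def Frel (u v : ℕ × (ℕ → ℕ)) : Prop := u.2 = v.2

/-- There is a smooth countable Borel equivalence relation `F` on `ℕ × ℕ^ℕ`
(concretely `(n,x) F (m,x') ⟺ x = x'`, whose classes are countable and which is smooth via the
second projection) and an open set `P ⊆ (ℕ × ℕ^ℕ) × 2^ℕ` with `⋂_{u ∈ C} P_u ≠ ∅` for every
`F`-class `C`, such that `P` admits no Borel `F`-invariant uniformization. -/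
theorem stmt8 :
    (∀ u : ℕ × (ℕ → ℕ), {v | Frel u v}.Countable) ∧
    (∃ S : ℕ × (ℕ → ℕ) → (ℕ → ℕ), Measurable S ∧ ∀ u v, Frel u v ↔ S u = S v) ∧
    ∃ P : Set ((ℕ × (ℕ → ℕ)) × (ℕ → Bool)),
      IsOpen P ∧
      (∀ u : ℕ × (ℕ → ℕ), (⋂ v ∈ {v | Frel u v}, {y | (v, y) ∈ P}).Nonempty) ∧
      ¬ ∃ f : ℕ × (ℕ → ℕ) → (ℕ → Bool), Measurable f ∧ (∀ u, (u, f u) ∈ P) ∧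
          ∀ u v, Frel u v → f u = f v := by
  refine ⟨?_, ⟨Prod.snd, measurable_snd, fun u v => Iff.rfl⟩, ?_⟩
  · intro u
    have hcl : {v | Frel u v} = Set.range (fun n : ℕ => (n, u.2)) := by
      ext v
      simp only [Frel, mem_setOf_eq, Set.mem_range]
      constructor
      · intro h
        exact ⟨v.1, by rw [h]⟩
      · rintro ⟨n, rfl⟩
        rfl
    rw [hcl]
    exact Set.countable_range _
  · refine ⟨{p | (p.1.2, p.2) ∈ Stmt8.Qn p.1.1}, ?_, ?_, ?_⟩
    · have hP : {p : (ℕ × (ℕ → ℕ)) × (ℕ → Bool) | (p.1.2, p.2) ∈ Stmt8.Qn p.1.1} =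
          ⋃ n, ((fun p : (ℕ × (ℕ → ℕ)) × (ℕ → Bool) => p.1.1) ⁻¹' {n}) ∩
            ((fun p : (ℕ × (ℕ → ℕ)) × (ℕ → Bool) => (p.1.2, p.2)) ⁻¹' Stmt8.Qn n) := by
        ext p
        simp only [mem_setOf_eq, Set.mem_iUnion, mem_inter_iff, mem_preimage, mem_singleton_iff]
        constructor
        · intro h
          exact ⟨p.1.1, rfl, h⟩
        · rintro ⟨n, hn, h⟩
          exact hn ▸ h
      rw [hP]
      apply isOpen_iUnion
      intro n
      apply IsOpen.inter
      · exact (isOpen_discrete _).preimage (continuous_fst.comp continuous_fst)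
      · exact (Stmt8.Qn_isOpen n).preimage
          (((continuous_snd.comp continuous_fst)).prodMk continuous_snd)
    · intro u
      obtain ⟨w, hw⟩ := Stmt8.condW_exists u.2
      refine ⟨Stmt8.embG w, ?_⟩
      rw [Set.mem_iInter₂]
      intro v hv
      have hv2 : u.2 = v.2 := hv
      show (v.2, Stmt8.embG w) ∈ Stmt8.Qn v.1
      rw [← hv2]
      exact Stmt8.mem_Qn_iff.2 ((Stmt8.mem_O_embG u.2 w).2 hw) v.1
    · rintro ⟨f, hf, hfP, hinv⟩
      set g : (ℕ → ℕ) → (ℕ → Bool) := fun x => f (0, x) with hg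
      have hgm : Measurable g := hf.comp (measurable_const.prodMk measurable_id)
      have hgR : ∀ x, ∀ i : Stmt8.AIdx, ((x, g x) : Stmt8.Pt) ∈ Stmt8.O i := by
        intro x
        rw [← Stmt8.mem_Qn_iff]
        intro n
        have h1 : ((n, x), f (n, x)) ∈ {p : (ℕ × (ℕ → ℕ)) × (ℕ → Bool) |
            (p.1.2, p.2) ∈ Stmt8.Qn p.1.1} := hfP (n, x)
        have h2 : f (n, x) = g x := hinv (n, x) (0, x) rfl
        rw [h2] at h1
        exact h1
      set B : Set (ℕ → ℕ) := {x | g x (Stmt8.pr 0 1) = true} with hB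
      have hBm : MeasurableSet B := by
        have hm : Measurable fun x => g x (Stmt8.pr 0 1) :=
          (measurable_pi_apply _).comp hgm
        exact hm (measurableSet_singleton true)
      refine Stmt8.insep hBm ?_ ?_
      · intro x hx
        obtain ⟨w, hwy, hcw⟩ := Stmt8.RR_elim (hgR x)
        have h0 : w 0 = 1 := by
          apply Stmt8.embG_pair.1
          rw [← hwy]
          exact hx
        exact Stmt8.condW_A₁ hcw h0
      · intro x hx
        obtain ⟨w, hwy, hcw⟩ := Stmt8.RR_elim (hgR x)
        have h0 : w 0 = 0 := by
          have hne : w 0 ≠ 1 := by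
            intro he
            apply hx
            show g x (Stmt8.pr 0 1) = true
            rw [hwy]
            exact Stmt8.embG_pair.2 he
          have := hcw.1
          omega
        exact Stmt8.condW_A₀ hcw h0
end
end

section
/- Fix a dense set S ⊆ ℕ^{<ℕ} (for every u there is s ∈ S extending u), a strictly increasing α ∈ ℕ^ℕ, and let X_α = {x ∈ ℕ^ℕ : ∀n ∃m ≥ n, x↾m ∈ α(m)^m}. Define the ℵ₀-dimensional directed hypergraph G₀^ω on X_α whose hyperedges are the sequences (s⌢i⌢x)_{i∈ℕ} for s ∈ S and x ∈ ℕ^ℕ (restricted to X_α). Then every Baire-measurable G₀^ω-independent subset of X_α is meager. -/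
/-!
A Baire measurable non-meagre set `A` is comeagre in some basic open set `N_t`. Extending `t` to
some `s ∈ S`, each map `x ↦ s⌢i⌢x` is a continuous open map into `N_t`, so it pulls `A` back to a
comeagre set. A point `x` in the intersection of these countably many comeagre sets gives a
hyperedge `(s⌢i⌢x)_i` inside `A`.
-/

open Set

/-- The concatenation `s⌢i⌢x ∈ ℕ^ℕ` of a finite sequence `s`, a single term `i`, and `x ∈ ℕ^ℕ`. -/
def extSeq (s : List ℕ) (i : ℕ) (x : ℕ → ℕ) : ℕ → ℕ := fun n =>
  if h : n < s.length then s.get ⟨n, h⟩ else if n = s.length then i else x (n - s.length - 1)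

/-- The dense `Gδ` set `X_α = {x ∈ ℕ^ℕ : ∀n ∃m ≥ n, x↾m ∈ α(m)^m}`. -/
def Xalpha (α : ℕ → ℕ) : Set (ℕ → ℕ) := {x | ∀ n, ∃ m ≥ n, ∀ i < m, x i < α m}

open Filter Topology PiNat

section Baire

variable {X Y : Type*} [TopologicalSpace X] [TopologicalSpace Y]

theorem BaireMeasurableSet.exists_isOpen_nonempty_eventually_mem {A : Set X}
    (hA : BaireMeasurableSet A) (hA' : ¬IsMeagre A) :
    ∃ U : Set X, IsOpen U ∧ U.Nonempty ∧ ∀ᶠ x in residual X, x ∈ U → x ∈ A := by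
  obtain ⟨U, hU, hAU⟩ := hA.residualEq_isOpen
  refine ⟨U, hU, nonempty_iff_ne_empty.2 fun hU₀ => hA' ?_, ?_⟩
  · exact eventuallyEq_empty.1 (hU₀ ▸ hAU)
  · exact (eventuallyEq_set.1 hAU).mono fun x hx => hx.2

theorem preimage_mem_residual_of_range_subset {f : X → Y} (hc : Continuous f) (ho : IsOpenMap f)
    {U A : Set Y} (hUA : ∀ᶠ y in residual Y, y ∈ U → y ∈ A) (hf : range f ⊆ U) :
    f ⁻¹' A ∈ residual X :=
  ((tendsto_residual_of_isOpenMap hc ho).eventually hUA).mono fun x hx => hx (hf ⟨x, rfl⟩)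

end Baire

section extSeq

variable (s : List ℕ) (i : ℕ) (x : ℕ → ℕ)

theorem extSeq_apply_lt {n : ℕ} (hn : n < s.length) : extSeq s i x n = s[n] := by
  simp [extSeq, hn]

theorem extSeq_apply_length : extSeq s i x s.length = i := by
  simp [extSeq]

theorem extSeq_apply_add (n : ℕ) : extSeq s i x (n + s.length + 1) = x n := by
  simp [extSeq, show ¬n + s.length + 1 < s.length by omega,
    show n + s.length + 1 ≠ s.length by omega, show n + s.length + 1 - s.length - 1 = n by omega]

theorem extSeq_apply_of_le {n : ℕ} (hn : n ≤ s.length) (y : ℕ → ℕ) :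
    extSeq s i x n = extSeq s i y n := by
  rcases hn.lt_or_eq with hn | rfl
  · simp [extSeq_apply_lt, hn]
  · simp [extSeq_apply_length]

theorem continuous_extSeq : Continuous (extSeq s i) := by
  refine continuous_pi fun n => ?_
  unfold extSeq
  split_ifs
  exacts [continuous_const, continuous_const, continuous_apply _]

theorem range_extSeq : range (extSeq s i) = cylinder (extSeq s i 0) (s.length + 1) := by
  refine Subset.antisymm ?_ fun z hz => ⟨fun n => z (n + s.length + 1), funext fun n => ?_⟩
  · rintro _ ⟨x, rfl⟩ n hn
    exact extSeq_apply_of_le s i x (Nat.le_of_lt_succ hn) 0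
  · rcases lt_or_ge n (s.length + 1) with hn | hn
    · rw [hz n hn]
      exact extSeq_apply_of_le s i _ (Nat.le_of_lt_succ hn) 0
    · obtain ⟨m, rfl⟩ := Nat.exists_eq_add_of_le' hn
      rw [← add_assoc, extSeq_apply_add]

theorem isOpenEmbedding_extSeq : IsOpenEmbedding (extSeq s i) where
  toIsEmbedding := .of_leftInverse (f := fun z n => z (n + s.length + 1))
    (fun x => funext (extSeq_apply_add s i x)) (continuous_pi fun _ => continuous_apply _)
    (continuous_extSeq s i)
  isOpen_range := range_extSeq s i ▸ isOpen_cylinder _ _ _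

theorem range_extSeq_subset_cylinder {y : ℕ → ℕ} {n : ℕ}
    (h : List.ofFn (fun k : Fin n => y k) <+: s) : range (extSeq s i) ⊆ cylinder y n := by
  rintro _ ⟨x, rfl⟩ k hk
  have hks : k < s.length := hk.trans_le (by simpa using h.length_le)
  rw [extSeq_apply_lt s i x hks, ← h.getElem (by simpa using hk), List.getElem_ofFn]

end extSeq

theorem exists_extSeq_forall_mem_of_eventually_mem {S : Set (List ℕ)}
    (hS : ∀ u : List ℕ, ∃ s ∈ S, u <+: s) {U A : Set (ℕ → ℕ)} (hU : IsOpen U) (hU' : U.Nonempty)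
    (hUA : ∀ᶠ y in residual (ℕ → ℕ), y ∈ U → y ∈ A) :
    ∃ s ∈ S, ∃ x : ℕ → ℕ, ∀ i : ℕ, extSeq s i x ∈ A := by
  obtain ⟨y, hy⟩ := hU'
  obtain ⟨_, ⟨z, n, rfl⟩, -, hzU⟩ :=
    (isTopologicalBasis_cylinders fun _ => ℕ).exists_subset_of_mem_open hy hU
  obtain ⟨s, hs, hzs⟩ := hS (List.ofFn fun k : Fin n => z k)
  have hres : ⋂ i, extSeq s i ⁻¹' A ∈ residual (ℕ → ℕ) :=
    countable_iInter_mem.2 fun i =>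
      preimage_mem_residual_of_range_subset (continuous_extSeq s i)
        (isOpenEmbedding_extSeq s i).isOpenMap hUA
        ((range_extSeq_subset_cylinder s i hzs).trans hzU)
  obtain ⟨x, hx⟩ := (dense_of_mem_residual hres).nonempty
  exact ⟨s, hs, x, mem_iInter.1 hx⟩

theorem stmt9_general (S : Set (List ℕ)) (hSdense : ∀ u : List ℕ, ∃ s ∈ S, u <+: s)
    (A : Set (ℕ → ℕ)) (hABaire : BaireMeasurableSet A)
    (hAindep : ¬ ∃ s ∈ S, ∃ x : ℕ → ℕ, ∀ i : ℕ, extSeq s i x ∈ A) :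
    IsMeagre A := by
  by_contra hA
  obtain ⟨U, hU, hU', hUA⟩ := hABaire.exists_isOpen_nonempty_eventually_mem hA
  exact hAindep (exists_extSeq_forall_mem_of_eventually_mem hSdense hU hU' hUA)

/-- For a dense `S ⊆ ℕ^{<ℕ}` and strictly increasing `α`, every Baire-measurable
subset of `X_α` that is independent for the hypergraph `G₀^ω` (with hyperedges
`(s⌢i⌢x)_{i ∈ ℕ}` for `s ∈ S`) is meager. -/
theorem stmt9 (S : Set (List ℕ)) (hSdense : ∀ u : List ℕ, ∃ s ∈ S, u <+: s)
    (α : ℕ → ℕ) (hα : StrictMono α)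
    (A : Set (ℕ → ℕ)) (hAsub : A ⊆ Xalpha α)
    (hABaire : BaireMeasurableSet A)
    (hAindep : ¬ ∃ s ∈ S, ∃ x : ℕ → ℕ, ∀ i : ℕ, extSeq s i x ∈ A) :
    IsMeagre A :=
  stmt9_general S hSdense A hABaire hAindep
end

section
/- Let R be an analytic quasi-order on a Polish space X and A₀, A₁ ⊆ X analytic sets such that (A₀ × A₁) ∩ R = ∅. Then there are Borel sets B₀ ⊇ A₀ and B₁ ⊇ A₁ with (B₀ × B₁) ∩ R = ∅, B₀ closed upwards under R (if x ∈ B₀ and x R y then y ∈ B₀), and B₁ closed downwards under R (if y ∈ B₁ and x R y then x ∈ B₁). -/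
open Set MeasureTheory

/-- Let `R` be an analytic quasi-order on a Polish space `X` and `A₀, A₁` analytic
sets with `(A₀ × A₁) ∩ R = ∅`. Then there are Borel sets `B₀ ⊇ A₀`, `B₁ ⊇ A₁` with
`(B₀ × B₁) ∩ R = ∅`, `B₀` closed upwards under `R` and `B₁` closed downwards under `R`. -/
theorem stmt11 {X : Type*}
    [TopologicalSpace X] [PolishSpace X] [MeasurableSpace X] [BorelSpace X]
    (R : X → X → Prop) (hrefl : Reflexive R) (htrans : Transitive R)
    (hRanalytic : AnalyticSet {p : X × X | R p.1 p.2})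
    (A₀ A₁ : Set X) (hA₀ : AnalyticSet A₀) (hA₁ : AnalyticSet A₁)
    (hindep : ∀ x ∈ A₀, ∀ y ∈ A₁, ¬ R x y) :
    ∃ B₀ B₁ : Set X, MeasurableSet B₀ ∧ MeasurableSet B₁ ∧ A₀ ⊆ B₀ ∧ A₁ ⊆ B₁ ∧
      (∀ x ∈ B₀, ∀ y ∈ B₁, ¬ R x y) ∧
      (∀ x ∈ B₀, ∀ y, R x y → y ∈ B₀) ∧
      (∀ y ∈ B₁, ∀ x, R x y → x ∈ B₁) := by
  classical
  -- upward closure operator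
  set up : Set X → Set X := fun S => {y | ∃ x ∈ S, R x y} with hup_def
  -- downward closure of A₁
  set D : Set X := {x | ∃ y ∈ A₁, R x y} with hD_def
  have hDana : AnalyticSet D := by
    have h1 : AnalyticSet (Prod.snd ⁻¹' A₁ : Set (X × X)) :=
      hA₁.preimage continuous_snd
    have h2 : AnalyticSet ({p : X × X | R p.1 p.2} ∩ Prod.snd ⁻¹' A₁) := by
      have := AnalyticSet.iInter (ι := Bool)
        (s := fun b => if b then {p : X × X | R p.1 p.2} else Prod.snd ⁻¹' A₁)
        (by rintro (_ | _) <;> simpa using ‹_›)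
      · convert this using 1
        ext p
        simp [Bool.forall_bool, and_comm]
    have h3 := h2.image_of_continuous (f := Prod.fst) continuous_fst
    convert h3 using 1
    ext x
    constructor
    · rintro ⟨y, hy, hR⟩
      exact ⟨(x, y), ⟨hR, hy⟩, rfl⟩
    · rintro ⟨⟨a, b⟩, ⟨hR, hb⟩, rfl⟩
      exact ⟨b, hb, hR⟩
  have hupana : ∀ S : Set X, AnalyticSet S → AnalyticSet (up S) := by
    intro S hS
    have h1 : AnalyticSet (Prod.fst ⁻¹' S : Set (X × X)) :=
      hS.preimage continuous_fst
    have h2 : AnalyticSet ({p : X × X | R p.1 p.2} ∩ Prod.fst ⁻¹' S) := by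
      have := AnalyticSet.iInter (ι := Bool)
        (s := fun b => if b then {p : X × X | R p.1 p.2} else Prod.fst ⁻¹' S)
        (by rintro (_ | _) <;> simpa using ‹_›)
      · convert this using 1
        ext p
        simp [Bool.forall_bool, and_comm]
    have h3 := h2.image_of_continuous (f := Prod.snd) continuous_snd
    convert h3 using 1
    ext y
    constructor
    · rintro ⟨x, hx, hR⟩
      exact ⟨(x, y), ⟨hR, hx⟩, rfl⟩
    · rintro ⟨⟨a, b⟩, ⟨hR, ha⟩, rfl⟩
      exact ⟨a, ha, hR⟩
  -- if S is disjoint from D then so is up S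
  have hupD : ∀ S : Set X, Disjoint S D → Disjoint (up S) D := by
    intro S hSD
    rw [Set.disjoint_left]
    rintro y ⟨x, hxS, hxy⟩ ⟨b, hb, hyb⟩
    exact Set.disjoint_left.1 hSD hxS ⟨b, hb, htrans hxy hyb⟩
  -- separation step
  have hstep : ∀ S : {S : Set X // AnalyticSet S ∧ Disjoint S D},
      ∃ T : Set X, (AnalyticSet T ∧ Disjoint T D) ∧ up S.1 ⊆ T ∧ MeasurableSet T := by
    rintro ⟨S, hS, hSD⟩
    obtain ⟨u, hu1, hu2, hu3⟩ :=
      (hupana S hS).measurablySeparable hDana (hupD S hSD)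
    exact ⟨u, ⟨hu3.analyticSet, hu2.symm⟩, hu1, hu3⟩
  choose step hstep1 hstep2 hstep3 using hstep
  have hA₀D : Disjoint A₀ D := by
    rw [Set.disjoint_left]
    rintro x hx ⟨b, hb, hxb⟩
    exact hindep x hx b hb hxb
  -- the iterated sequence
  let seq : ℕ → {S : Set X // AnalyticSet S ∧ Disjoint S D} := fun n =>
    Nat.rec ⟨A₀, hA₀, hA₀D⟩ (fun _ p => ⟨step p, hstep1 p⟩) n
  have hseq_succ : ∀ n, seq (n + 1) = ⟨step (seq n), hstep1 (seq n)⟩ := fun n => rfl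
  refine ⟨⋃ n, (seq (n + 1)).1, (⋃ n, (seq (n + 1)).1)ᶜ, ?_, ?_, ?_, ?_, ?_, ?_, ?_⟩
  · exact MeasurableSet.iUnion fun n => by rw [hseq_succ]; exact hstep3 (seq n)
  · exact (MeasurableSet.iUnion fun n => by rw [hseq_succ]; exact hstep3 (seq n)).compl
  · intro x hx
    refine Set.mem_iUnion.2 ⟨0, ?_⟩
    rw [hseq_succ]
    exact hstep2 (seq 0) ⟨x, hx, hrefl x⟩
  · intro y hy
    simp only [Set.mem_compl_iff, Set.mem_iUnion]
    rintro ⟨n, hn⟩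
    exact Set.disjoint_left.1 (seq (n + 1)).2.2 hn ⟨y, hy, hrefl y⟩
  · intro x hx y hy hxy
    apply hy
    obtain ⟨n, hn⟩ := Set.mem_iUnion.1 hx
    refine Set.mem_iUnion.2 ⟨n + 1, ?_⟩
    rw [hseq_succ (n + 1)]
    exact hstep2 (seq (n + 1)) ⟨x, hn, hxy⟩
  · intro x hx y hxy
    obtain ⟨n, hn⟩ := Set.mem_iUnion.1 hx
    refine Set.mem_iUnion.2 ⟨n + 1, ?_⟩
    rw [hseq_succ (n + 1)]
    exact hstep2 (seq (n + 1)) ⟨x, hn, hxy⟩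
  · intro y hy x hxy hx
    exact hy (Set.mem_iUnion.2 (by
      obtain ⟨n, hn⟩ := Set.mem_iUnion.1 hx
      exact ⟨n + 1, by rw [hseq_succ (n + 1)]; exact hstep2 (seq (n + 1)) ⟨x, hn, hxy⟩⟩))
end

section
/- Let f : (2^ℕ)^ℕ → 2^ℕ be a Borel function such that x E₁ y implies f(x) = f(y), where E₁ is the relation of eventual equality of sequences: x E₁ y iff x_n = y_n for all but finitely many n. Then there exists x ∈ (2^ℕ)^ℕ such that f(x) = x_n for infinitely many n. -/
/-!
Retopologize `2^ℕ` discretely and call the result `S`. The space `S^ℕ` is completely metrizable,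
hence Baire, and the identity `S^ℕ → (2^ℕ)^ℕ` is continuous, so `f` is Baire measurable on `S^ℕ`.
There, a Baire measurable set invariant under eventual equality is meagre or comeagre: a
homeomorphism that changes only finitely many coordinates moves any point into any given nonempty
open set. Hence `f` takes a single value `b` on a comeagre set, while a generic `x` has `x n = b`
for infinitely many `n`; any `x` generic for both properties works. Passing to the uncountable
alphabet `S` is what makes Friedman's anti-diagonalization theorem unnecessary.
-/

open Set Filter Topology

theorem Continuous.baireMeasurableSet_preimage {X Y : Type*} [TopologicalSpace X]
    [TopologicalSpace Y] [MeasurableSpace Y] [BorelSpace Y] {g : X → Y} (hg : Continuous g)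
    {s : Set Y} (hs : MeasurableSet s) : BaireMeasurableSet (g ⁻¹' s) := by
  borelize X
  exact (hg.measurable hs).baireMeasurableSet

namespace TailEquivalence

variable {S : Type*} [TopologicalSpace S] [DiscreteTopology S]

open Classical in
noncomputable def swapBelow (z w : ℕ → S) (N : ℕ) : (ℕ → S) ≃ₜ (ℕ → S) :=
  Homeomorph.piCongrRight fun n =>
    if n < N then (Equiv.swap (z n) (w n)).toHomeomorphOfDiscrete else Homeomorph.refl S

theorem swapBelow_apply_of_le {z w x : ℕ → S} {N n : ℕ} (h : N ≤ n) :
    swapBelow z w N x n = x n := by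
  simp [swapBelow, Homeomorph.piCongrRight, not_lt.2 h]

theorem swapBelow_apply_self_of_lt {z w : ℕ → S} {N n : ℕ} (h : n < N) :
    swapBelow z w N w n = z n := by
  simp [swapBelow, Homeomorph.piCongrRight, h, Equiv.toHomeomorphOfDiscrete]

theorem swapBelow_eventuallyEq (z w x : ℕ → S) (N : ℕ) : swapBelow z w N x =ᶠ[atTop] x :=
  eventually_atTop.2 ⟨N, fun _ => swapBelow_apply_of_le⟩

theorem exists_homeomorph_eventuallyEq_inter_preimage_nonempty {u v : Set (ℕ → S)}
    (hu : IsOpen u) (hu' : u.Nonempty) (hv : v.Nonempty) :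
    ∃ T : (ℕ → S) ≃ₜ (ℕ → S), (∀ x, T x =ᶠ[atTop] x) ∧ (v ∩ T ⁻¹' u).Nonempty := by
  obtain ⟨z, hz⟩ := hu'
  obtain ⟨w, hw⟩ := hv
  obtain ⟨_, ⟨z', N, rfl⟩, hz', hNu⟩ :=
    (PiNat.isTopologicalBasis_cylinders fun _ => S).exists_subset_of_mem_open hz hu
  refine ⟨swapBelow z w N, fun x => swapBelow_eventuallyEq z w x N, w, hw, hNu ?_⟩
  exact fun i hi => (swapBelow_apply_self_of_lt hi).trans (hz' i hi)

theorem _root_.BaireMeasurableSet.mem_residual_or_compl_mem_residual_of_tail_invariant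
    {A : Set (ℕ → S)} (hA : BaireMeasurableSet A)
    (hinv : ∀ x y, x =ᶠ[atTop] y → (x ∈ A ↔ y ∈ A)) :
    A ∈ residual _ ∨ Aᶜ ∈ residual _ := by
  obtain ⟨u, hu, hAu⟩ := hA.residualEq_isOpen
  obtain ⟨v, hv, hAv⟩ := hA.compl.residualEq_isOpen
  rcases u.eq_empty_or_nonempty with rfl | hu'
  · exact .inr (eventuallyEq_empty.1 hAu)
  rcases v.eq_empty_or_nonempty with rfl | hv'
  · exact .inl (by simpa using eventuallyEq_empty.1 hAv)
  exfalso
  obtain ⟨T, hT, hvTu⟩ := exists_homeomorph_eventuallyEq_inter_preimage_nonempty hu hu' hv'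
  have hTAu : (A ∘ T : Set _) =ᶠ[residual _] (u ∘ T : Set _) :=
    hAu.comp_tendsto (tendsto_residual_of_isOpenMap T.continuous T.isOpenMap)
  obtain ⟨x, ⟨hxv, hTxu⟩, hxAv, hTxA⟩ := (dense_of_mem_residual (hAv.and hTAu)).inter_open_nonempty
    _ (hv.inter (hu.preimage T.continuous)) hvTu
  have hxA : x ∈ Aᶜ := (iff_of_eq hxAv).2 hxv
  exact hxA ((hinv _ _ (hT x)).1 ((iff_of_eq hTxA).2 hTxu))

theorem exists_eventuallyEq_const_of_tail_invariant {β : Type*} [MeasurableSpace β]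
    [MeasurableSpace.CountablySeparated β] [Nonempty β] {f : (ℕ → S) → β}
    (hf : ∀ s, MeasurableSet s → BaireMeasurableSet (f ⁻¹' s))
    (hinv : ∀ x y, x =ᶠ[atTop] y → f x = f y) :
    ∃ b, f =ᶠ[residual _] fun _ => b :=
  exists_eventuallyEq_const_of_forall_separating MeasurableSet fun U hU =>
    (hf U hU).mem_residual_or_compl_mem_residual_of_tail_invariant fun x y hxy => by
      simp only [mem_preimage, hinv x y hxy]

theorem eventually_residual_frequently_eq (b : S) :
    ∀ᶠ x in residual (ℕ → S), ∃ᶠ n in atTop, x n = b := by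
  simp only [frequently_atTop]
  refine eventually_countable_forall.2 fun N => residual_of_dense_open ?_ ?_
  · have : {x : ℕ → S | ∃ n ≥ N, x n = b} = ⋃ n ≥ N, (fun x => x n) ⁻¹' {b} := by ext; simp
    rw [this]
    exact isOpen_biUnion fun n _ => (isOpen_discrete _).preimage (continuous_apply n)
  · refine (PiNat.isTopologicalBasis_cylinders fun _ => S).dense_iff.2 ?_
    rintro _ ⟨z, m, rfl⟩ -
    refine ⟨Function.update z (max N m) b, fun i hi => ?_, max N m, le_max_left N m, by simp⟩
    exact Function.update_of_ne (by omega) _ _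

end TailEquivalence

def DiscreteCantor : Type := ℕ → Bool

instance : TopologicalSpace DiscreteCantor := ⊥
instance : DiscreteTopology DiscreteCantor := ⟨rfl⟩
instance : Nonempty DiscreteCantor := ⟨fun _ => false⟩

/-- anti-diagonalization for `E₁`: If `f : (2^ℕ)^ℕ → 2^ℕ` is Borel and invariant
under eventual equality of sequences, then there is `x` with `f(x) = x_n` for infinitely
many `n`. -/
theorem stmt13 (f : (ℕ → (ℕ → Bool)) → (ℕ → Bool)) (hf : Measurable f)
    (hinv : ∀ x y : ℕ → (ℕ → Bool), (∀ᶠ n in atTop, x n = y n) → f x = f y) :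
    ∃ x : ℕ → (ℕ → Bool), {n | f x = x n}.Infinite := by
  let ι : (ℕ → DiscreteCantor) → ℕ → ℕ → Bool := id
  have hι : Continuous ι := continuous_pi fun n =>
    (continuous_of_discreteTopology (α := DiscreteCantor) (β := ℕ → Bool) (f := id)).comp
      (continuous_apply n)
  obtain ⟨b, hb⟩ := TailEquivalence.exists_eventuallyEq_const_of_tail_invariant (f := f ∘ ι)
    (fun s hs => hι.baireMeasurableSet_preimage (hf hs)) fun x y hxy => hinv _ _ hxy
  obtain ⟨x, hfx, hx⟩ := (dense_of_mem_residual
    (hb.and (TailEquivalence.eventually_residual_frequently_eq (S := DiscreteCantor) b))).nonempty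
  exact ⟨ι x, Nat.frequently_atTop_iff_infinite.1 <| hx.mono fun n hn => hfx.trans hn.symm⟩
end
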